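/- arXiv:2309.15611 — 8 statements merged into one kernel-verified Lean document; each statement's English description precedes it below -/
import Mathlib

section
/- Let g : [0,1] × ℝ → ℝⁿ be continuous with g(x, y+1) = g(x, y) for all x ∈ [0,1], y ∈ ℝ. Then for all x ∈ [0,1] and ε > 0, ‖∫₀ˣ (g(y, y/ε) − ∫₀¹ g(y, z) dz) dy‖ ≤ 2(ω_g(ε) + ε‖g‖_*), where ω_g(ε) := sup{‖g(x₁,y) − g(x₂,y)‖ : x₁, x₂ ∈ [0,1], y ∈ ℝ, |x₁ − x₂| ≤ ε} and ‖g‖_* := sup{‖g(x,y)‖ : (x,y) ∈ [0,1] × ℝ}. -/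
open Set intervalIntegral

theorem stmt2 {n : ℕ} (g : ℝ → ℝ → EuclideanSpace ℝ (Fin n))
    (hg : ContinuousOn (fun p : ℝ × ℝ => g p.1 p.2) (Icc 0 1 ×ˢ (univ : Set ℝ)))
    (hper : ∀ x ∈ Icc (0:ℝ) 1, ∀ y : ℝ, g x (y + 1) = g x y)
    (ε : ℝ) (hε : 0 < ε) (ω C : ℝ)
    (hω : ∀ x₁ ∈ Icc (0:ℝ) 1, ∀ x₂ ∈ Icc (0:ℝ) 1, ∀ y : ℝ,
      |x₁ - x₂| ≤ ε → ‖g x₁ y - g x₂ y‖ ≤ ω)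
    (hC : ∀ x ∈ Icc (0:ℝ) 1, ∀ y : ℝ, ‖g x y‖ ≤ C) :
    ∀ x ∈ Icc (0:ℝ) 1,
      ‖∫ y in (0:ℝ)..x, (g y (y / ε) - ∫ z in (0:ℝ)..1, g y z)‖ ≤ 2 * (ω + ε * C) := by
  -- clamping map
  set π : ℝ → ℝ := fun t => max 0 (min 1 t) with hπdef
  have hπmem : ∀ t, π t ∈ Icc (0:ℝ) 1 := by
    intro t
    constructor
    · exact le_max_left _ _
    · simp only [hπdef, max_le_iff]
      exact ⟨zero_le_one, min_le_left _ _⟩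
  have hπlip : ∀ a b : ℝ, |π a - π b| ≤ |a - b| := by
    intro a b
    calc |π a - π b| = |max 0 (min 1 a) - max 0 (min 1 b)| := rfl
      _ ≤ max |(0:ℝ) - 0| |min 1 a - min 1 b| := abs_max_sub_max_le_max _ _ _ _
      _ ≤ max 0 (max |(1:ℝ) - 1| |a - b|) := by
          apply max_le_max
          · simp
          · exact abs_min_sub_min_le_max _ _ _ _
      _ ≤ |a - b| := by simp [abs_nonneg]
  have hπid : ∀ t ∈ Icc (0:ℝ) 1, π t = t := by
    intro t ht
    simp only [hπdef]
    rw [min_eq_right ht.2, max_eq_right ht.1]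
  set G : ℝ → ℝ → EuclideanSpace ℝ (Fin n) := fun s t => g (π s) t with hGdef
  have hGc : Continuous (Function.uncurry G) := by
    have heq : Function.uncurry G
        = (fun p : ℝ × ℝ => g p.1 p.2) ∘ (fun p : ℝ × ℝ => (π p.1, p.2)) := rfl
    rw [heq]
    exact hg.comp_continuous
      ((continuous_const.max (continuous_const.min continuous_fst)).prodMk continuous_snd)
      (fun p => ⟨hπmem _, mem_univ _⟩)
  have hGper : ∀ s, Function.Periodic (fun t => G s t) 1 := fun s t => hper _ (hπmem s) t
  have hGC : ∀ s t, ‖G s t‖ ≤ C := fun s t => hC _ (hπmem s) t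
  have hGω : ∀ s₁ s₂ t : ℝ, |s₁ - s₂| ≤ ε → ‖G s₁ t - G s₂ t‖ ≤ ω :=
    fun s₁ s₂ t h => hω _ (hπmem s₁) _ (hπmem s₂) t ((hπlip s₁ s₂).trans h)
  set F : ℝ → EuclideanSpace ℝ (Fin n) := fun s => ∫ z in (0:ℝ)..1, G s z with hFdef
  have hFc : Continuous F :=
    continuous_parametric_intervalIntegral_of_continuous' hGc 0 1
  have hFC : ∀ s, ‖F s‖ ≤ C := by
    intro s
    have := intervalIntegral.norm_integral_le_of_norm_le_const
      (C := C) (a := (0:ℝ)) (b := 1) (f := fun z => G s z) (fun z _ => hGC s z)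
    simpa using this
  have hGsc : ∀ s, Continuous (fun t => G s t) := by
    intro s
    exact hGc.comp (continuous_const.prodMk continuous_id)
  have hFω : ∀ s₁ s₂ : ℝ, |s₁ - s₂| ≤ ε → ‖F s₁ - F s₂‖ ≤ ω := by
    intro s₁ s₂ h
    have hsub : F s₁ - F s₂ = ∫ z in (0:ℝ)..1, (G s₁ z - G s₂ z) := by
      rw [intervalIntegral.integral_sub ((hGsc s₁).intervalIntegrable _ _)
        ((hGsc s₂).intervalIntegrable _ _)]
    rw [hsub]
    have := intervalIntegral.norm_integral_le_of_norm_le_const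
      (C := ω) (a := (0:ℝ)) (b := 1) (f := fun z => G s₁ z - G s₂ z)
      (fun z _ => hGω s₁ s₂ z h)
    simpa using this
  -- the integrand
  have hhc : Continuous (fun y : ℝ => G y (y / ε) - F y) := by
    apply Continuous.sub _ hFc
    exact hGc.comp (continuous_id.prodMk (continuous_id.div_const ε))
  -- cancellation on blocks
  have key : ∀ a : ℝ, (∫ y in a..a + ε, G a (y / ε)) = ε • F a := by
    intro a
    rw [intervalIntegral.integral_comp_div (f := fun t => G a t) hε.ne']
    have h1 : (a + ε) / ε = a / ε + 1 := by field_simp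
    rw [h1, (hGper a).intervalIntegral_add_eq (a / ε) 0, zero_add]
  -- per-block bound
  have block : ∀ a : ℝ, ‖∫ y in a..a + ε, (G y (y / ε) - F y)‖ ≤ 2 * ω * ε := by
    intro a
    have i1 : IntervalIntegrable (fun y => G y (y / ε) - G a (y / ε)) MeasureTheory.volume a (a + ε) := by
      apply Continuous.intervalIntegrable
      exact (hGc.comp (continuous_id.prodMk (continuous_id.div_const ε))).sub
        (hGc.comp (continuous_const.prodMk (continuous_id.div_const ε)))
    have i2 : IntervalIntegrable (fun y => F a - F y) MeasureTheory.volume a (a + ε) :=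
      (continuous_const.sub hFc).intervalIntegrable _ _
    have i3 : IntervalIntegrable (fun y => G a (y / ε) - F a) MeasureTheory.volume a (a + ε) := by
      apply Continuous.intervalIntegrable
      exact (hGc.comp (continuous_const.prodMk (continuous_id.div_const ε))).sub continuous_const
    have split : (∫ y in a..a + ε, (G y (y / ε) - F y))
        = (∫ y in a..a + ε, (G y (y / ε) - G a (y / ε)))
          + ((∫ y in a..a + ε, (F a - F y))
          + (∫ y in a..a + ε, (G a (y / ε) - F a))) := by
      rw [← intervalIntegral.integral_add i2 i3, ← intervalIntegral.integral_add i1 (i2.add i3)]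
      congr 1
      funext y
      abel
    have ic : Continuous (fun y : ℝ => G a (y / ε)) :=
      hGc.comp (continuous_const.prodMk (continuous_id.div_const ε))
    have third : (∫ y in a..a + ε, (G a (y / ε) - F a)) = 0 := by
      rw [intervalIntegral.integral_sub (ic.intervalIntegrable _ _)
        (intervalIntegrable_const), key a, intervalIntegral.integral_const]
      simp
    have b1 : ‖∫ y in a..a + ε, (G y (y / ε) - G a (y / ε))‖ ≤ ω * ε := by
      have := intervalIntegral.norm_integral_le_of_norm_le_const
        (C := ω) (a := a) (b := a + ε) (f := fun y => G y (y / ε) - G a (y / ε)) ?_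
      · calc ‖∫ y in a..a + ε, (G y (y / ε) - G a (y / ε))‖ ≤ ω * |a + ε - a| := this
          _ = ω * ε := by rw [add_sub_cancel_left, abs_of_pos hε]
      · intro y hy
        rw [uIoc_of_le (by linarith)] at hy
        exact hGω y a _ (by rw [abs_of_nonneg (by linarith [hy.1.le])]; linarith [hy.2])
    have b2 : ‖∫ y in a..a + ε, (F a - F y)‖ ≤ ω * ε := by
      have := intervalIntegral.norm_integral_le_of_norm_le_const
        (C := ω) (a := a) (b := a + ε) (f := fun y => F a - F y) ?_
      · calc ‖∫ y in a..a + ε, (F a - F y)‖ ≤ ω * |a + ε - a| := this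
          _ = ω * ε := by rw [add_sub_cancel_left, abs_of_pos hε]
      · intro y hy
        rw [uIoc_of_le (by linarith)] at hy
        exact hFω a y (by rw [abs_of_nonpos (by linarith [hy.1.le])]; linarith [hy.2])
    rw [split, third, add_zero]
    calc ‖(∫ y in a..a + ε, (G y (y / ε) - G a (y / ε)))
          + (∫ y in a..a + ε, (F a - F y))‖
        ≤ ‖∫ y in a..a + ε, (G y (y / ε) - G a (y / ε))‖
          + ‖∫ y in a..a + ε, (F a - F y)‖ := norm_add_le _ _
      _ ≤ ω * ε + ω * ε := add_le_add b1 b2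
      _ = 2 * ω * ε := by ring
  -- nonnegativity of ω and C
  have hω0 : 0 ≤ ω := by
    have := hω 0 ⟨le_rfl, zero_le_one⟩ 0 ⟨le_rfl, zero_le_one⟩ 0 (by simpa using hε.le)
    simpa using this
  have hC0 : 0 ≤ C := le_trans (norm_nonneg _) (hC 0 ⟨le_rfl, zero_le_one⟩ 0)
  -- main
  intro x hx
  obtain ⟨hx0, hx1⟩ := hx
  -- replace g by G in the integral
  have hcongr : (∫ y in (0:ℝ)..x, (g y (y / ε) - ∫ z in (0:ℝ)..1, g y z))
      = ∫ y in (0:ℝ)..x, (G y (y / ε) - F y) := by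
    apply intervalIntegral.integral_congr
    intro y hy
    rw [uIcc_of_le hx0] at hy
    have hy' : y ∈ Icc (0:ℝ) 1 := ⟨hy.1, hy.2.trans hx1⟩
    have hπy : π y = y := hπid y hy'
    simp only [hGdef, hFdef, hπy]
  rw [hcongr]
  set N : ℕ := ⌊x / ε⌋₊ with hNdef
  have hNle : (N : ℝ) * ε ≤ x := by
    have := Nat.floor_le (div_nonneg hx0 hε.le)
    calc (N : ℝ) * ε ≤ (x / ε) * ε := by nlinarith
      _ = x := by field_simp
  have hNgt : x < ((N : ℝ) + 1) * ε := by
    have := Nat.lt_floor_add_one (x / ε)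
    calc x = (x / ε) * ε := by field_simp
      _ < ((N : ℝ) + 1) * ε := by nlinarith
  have hsplit : (∫ y in (0:ℝ)..x, (G y (y / ε) - F y))
      = (∫ y in (0:ℝ)..(N : ℝ) * ε, (G y (y / ε) - F y))
        + ∫ y in ((N : ℝ) * ε)..x, (G y (y / ε) - F y) := by
    rw [intervalIntegral.integral_add_adjacent_intervals
      (hhc.intervalIntegrable _ _) (hhc.intervalIntegrable _ _)]
  have hsum : (∫ y in (0:ℝ)..(N : ℝ) * ε, (G y (y / ε) - F y))
      = ∑ k ∈ Finset.range N, ∫ y in ((k : ℝ) * ε)..(((k : ℝ) + 1) * ε), (G y (y / ε) - F y) := by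
    have := intervalIntegral.sum_integral_adjacent_intervals
      (μ := MeasureTheory.volume) (a := fun k : ℕ => (k : ℝ) * ε) (f := fun y => G y (y / ε) - F y) (n := N)
      (fun k _ => hhc.intervalIntegrable _ _)
    simp only [Nat.cast_zero, zero_mul] at this
    rw [← this]
    congr 1
    funext k
    push_cast
    ring_nf
  have hsumb : ‖∫ y in (0:ℝ)..(N : ℝ) * ε, (G y (y / ε) - F y)‖ ≤ 2 * ω := by
    rw [hsum]
    calc ‖∑ k ∈ Finset.range N, ∫ y in ((k : ℝ) * ε)..(((k : ℝ) + 1) * ε), (G y (y / ε) - F y)‖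
        ≤ ∑ k ∈ Finset.range N, ‖∫ y in ((k : ℝ) * ε)..(((k : ℝ) + 1) * ε), (G y (y / ε) - F y)‖ :=
          norm_sum_le _ _
      _ ≤ ∑ k ∈ Finset.range N, 2 * ω * ε := by
          apply Finset.sum_le_sum
          intro k _
          have := block ((k : ℝ) * ε)
          have heq : (k : ℝ) * ε + ε = ((k : ℝ) + 1) * ε := by ring
          rwa [heq] at this
      _ = (N : ℝ) * (2 * ω * ε) := by rw [Finset.sum_const, Finset.card_range]; simp
      _ ≤ 2 * ω := by nlinarith [hNle, hx1, hω0, hε]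
  have hrem : ‖∫ y in ((N : ℝ) * ε)..x, (G y (y / ε) - F y)‖ ≤ 2 * C * ε := by
    have hb := intervalIntegral.norm_integral_le_of_norm_le_const
      (C := 2 * C) (a := (N : ℝ) * ε) (b := x) (f := fun y => G y (y / ε) - F y) ?_
    · calc ‖∫ y in ((N : ℝ) * ε)..x, (G y (y / ε) - F y)‖ ≤ 2 * C * |x - (N : ℝ) * ε| := hb
        _ ≤ 2 * C * ε := by
            apply mul_le_mul_of_nonneg_left _ (by linarith)
            rw [abs_of_nonneg (by linarith)]
            linarith
    · intro y _
      calc ‖G y (y / ε) - F y‖ ≤ ‖G y (y / ε)‖ + ‖F y‖ := norm_sub_le _ _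
        _ ≤ C + C := add_le_add (hGC y _) (hFC y)
        _ = 2 * C := by ring
  calc ‖∫ y in (0:ℝ)..x, (G y (y / ε) - F y)‖
      ≤ ‖∫ y in (0:ℝ)..(N : ℝ) * ε, (G y (y / ε) - F y)‖
        + ‖∫ y in ((N : ℝ) * ε)..x, (G y (y / ε) - F y)‖ := by
        rw [hsplit]; exact norm_add_le _ _
    _ ≤ 2 * ω + 2 * C * ε := add_le_add hsumb hrem
    _ = 2 * (ω + ε * C) := by ring
end

section
/- Let h : [0,1] × ℝ → ℝⁿ be continuous, 1-periodic in the second variable, with ∫₀¹ h(x, z) dz = 0 for every x ∈ [0,1]. Then for all x ∈ [0,1] and ε > 0, ‖∫₀ˣ h(y, y/ε) dy‖ ≤ ε(⌊x/ε⌋ ω_h(ε) + ‖h‖_*), where ω_h(ε) := sup{‖h(x₁,y) − h(x₂,y)‖ : |x₁−x₂| ≤ ε, y ∈ ℝ} and ‖h‖_* := sup ‖h‖. -/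
/-!
Cut `[0, x]` into the `⌊x/ε⌋` cells `[kε, (k+1)ε]` and a remainder of length `< ε`. On a cell,
`y ↦ y/ε` runs through exactly one period, so by the zero-mean hypothesis the integral of
`h(kε, y/ε)` over it vanishes; replacing `h(y, y/ε)` by `h(kε, y/ε)` therefore costs at most `ε ω`
per cell. The remainder is bounded by `ε ‖h‖_*`.
-/

open Set Function MeasureTheory

variable {E : Type*} [NormedAddCommGroup E] [NormedSpace ℝ E]

theorem Function.Periodic.intervalIntegral_comp_div_eq_zero {g : ℝ → E} (hg : Periodic g 1)
    (hmean : ∫ z in (0 : ℝ)..1, g z = 0) (t ε : ℝ) :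
    ∫ y in t..t + ε, g (y / ε) = 0 := by
  rcases eq_or_ne ε 0 with rfl | hε
  · simp
  rw [intervalIntegral.integral_comp_div g hε, add_div, div_self hε,
    hg.intervalIntegral_add_eq (t / ε) 0, zero_add, hmean, smul_zero]

theorem norm_integral_cell_le {h : ℝ → ℝ → E} {t ε ω : ℝ} (hε : 0 ≤ ε)
    (hcont : ContinuousOn (fun y => h y (y / ε)) (Icc t (t + ε))) (hct : Continuous (h t))
    (hper : Periodic (h t) 1) (hmean : ∫ z in (0 : ℝ)..1, h t z = 0)
    (hω : ∀ y ∈ Icc t (t + ε), ‖h y (y / ε) - h t (y / ε)‖ ≤ ω) :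
    ‖∫ y in t..t + ε, h y (y / ε)‖ ≤ ε * ω := by
  have hle : t ≤ t + ε := le_add_of_nonneg_right hε
  have hfrozen : IntervalIntegrable (fun y => h t (y / ε)) volume t (t + ε) :=
    (hct.comp (continuous_id.div_const ε)).intervalIntegrable _ _
  have hmoving : IntervalIntegrable (fun y => h y (y / ε)) volume t (t + ε) :=
    (hcont.mono (uIcc_of_le hle).subset).intervalIntegrable
  calc ‖∫ y in t..t + ε, h y (y / ε)‖
      = ‖∫ y in t..t + ε, (h y (y / ε) - h t (y / ε))‖ := by
        rw [intervalIntegral.integral_sub hmoving hfrozen,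
          hper.intervalIntegral_comp_div_eq_zero hmean, sub_zero]
    _ ≤ ω * |t + ε - t| :=
        intervalIntegral.norm_integral_le_of_norm_le_const fun y hy =>
          hω y (Ioc_subset_Icc_self ((uIoc_of_le hle) ▸ hy))
    _ = ε * ω := by rw [add_sub_cancel_left, abs_of_nonneg hε, mul_comm]

theorem norm_integral_le_of_norm_integral_cells_le {f : ℝ → E} {δ A : ℝ} (N : ℕ)
    (hint : ∀ k < N, IntervalIntegrable f volume (k * δ) ((k + 1) * δ))
    (hcell : ∀ k < N, ‖∫ y in k * δ..(k + 1) * δ, f y‖ ≤ A) :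
    ‖∫ y in (0 : ℝ)..N * δ, f y‖ ≤ N * A := by
  have hsum := intervalIntegral.sum_integral_adjacent_intervals (a := fun k : ℕ => (k : ℝ) * δ)
    (f := f) (μ := volume) (n := N) (by exact_mod_cast hint)
  push_cast at hsum
  rw [zero_mul] at hsum
  rw [← hsum]
  calc ‖∑ k ∈ Finset.range N, ∫ y in k * δ..(k + 1) * δ, f y‖
      ≤ ∑ k ∈ Finset.range N, ‖∫ y in k * δ..(k + 1) * δ, f y‖ := norm_sum_le _ _
    _ ≤ ∑ _k ∈ Finset.range N, A :=
        Finset.sum_le_sum fun k hk => hcell k (Finset.mem_range.mp hk)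
    _ = N * A := by rw [Finset.sum_const, Finset.card_range, nsmul_eq_mul]

theorem norm_integral_cells_le {h : ℝ → ℝ → E} {ε ω : ℝ} (hε : 0 ≤ ε)
    (hfast : ContinuousOn (fun y => h y (y / ε)) (Icc 0 1))
    (hslow : ∀ t ∈ Icc (0 : ℝ) 1, Continuous (h t))
    (hper : ∀ t ∈ Icc (0 : ℝ) 1, Periodic (h t) 1)
    (hmean : ∀ t ∈ Icc (0 : ℝ) 1, ∫ z in (0 : ℝ)..1, h t z = 0)
    (hω : ∀ x₁ ∈ Icc (0 : ℝ) 1, ∀ x₂ ∈ Icc (0 : ℝ) 1, ∀ y : ℝ,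
      |x₁ - x₂| ≤ ε → ‖h x₁ y - h x₂ y‖ ≤ ω)
    {N : ℕ} (hN : N * ε ≤ 1) :
    ‖∫ y in (0 : ℝ)..N * ε, h y (y / ε)‖ ≤ N * (ε * ω) := by
  have hcell : ∀ k < N, Icc (k * ε) (k * ε + ε) ⊆ Icc 0 1 := fun k hk => by
    have : (k + 1 : ℝ) * ε ≤ N * ε := by gcongr; exact_mod_cast hk
    exact Icc_subset_Icc (by positivity) (by linarith [add_one_mul (k : ℝ) ε])
  refine norm_integral_le_of_norm_integral_cells_le N (fun k hk => ?_) (fun k hk => ?_)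
  all_goals
    rw [add_one_mul]
    have hk0 : (k : ℝ) * ε ∈ Icc (0 : ℝ) 1 := hcell k hk (left_mem_Icc.mpr (by linarith))
  · exact (hfast.mono ((uIcc_of_le (by linarith)).subset.trans (hcell k hk))).intervalIntegrable
  · refine norm_integral_cell_le hε (hfast.mono (hcell k hk)) (hslow _ hk0) (hper _ hk0)
      (hmean _ hk0) fun y hy => hω y (hcell k hk hy) _ hk0 _ ?_
    rw [abs_le]
    constructor <;> linarith [hy.1, hy.2]

theorem norm_integral_le_mul_of_sub_le {f : ℝ → E} {a b δ C : ℝ} (hab : a ≤ b) (hba : b - a ≤ δ)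
    (hC : 0 ≤ C) (hf : ∀ y ∈ Ioc a b, ‖f y‖ ≤ C) :
    ‖∫ y in a..b, f y‖ ≤ δ * C :=
  calc ‖∫ y in a..b, f y‖ ≤ C * |b - a| :=
        intervalIntegral.norm_integral_le_of_norm_le_const fun y hy => hf y (uIoc_of_le hab ▸ hy)
    _ ≤ δ * C := by
        rw [abs_of_nonneg (sub_nonneg.mpr hab), mul_comm]
        gcongr

theorem floor_div_mul_le_and_lt {x ε : ℝ} (hx : 0 ≤ x) (hε : 0 < ε) :
    ⌊x / ε⌋₊ * ε ≤ x ∧ x < ⌊x / ε⌋₊ * ε + ε := by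
  constructor
  · exact (le_div_iff₀ hε).mp (Nat.floor_le (div_nonneg hx hε.le))
  · rw [← add_one_mul]
    exact (div_lt_iff₀ hε).mp (Nat.lt_floor_add_one _)

theorem stmt4 {n : ℕ} (h : ℝ → ℝ → EuclideanSpace ℝ (Fin n))
    (hcont : ContinuousOn (fun p : ℝ × ℝ => h p.1 p.2) (Icc 0 1 ×ˢ (univ : Set ℝ)))
    (hper : ∀ x ∈ Icc (0:ℝ) 1, ∀ y : ℝ, h x (y + 1) = h x y)
    (hmean : ∀ x ∈ Icc (0:ℝ) 1, (∫ z in (0:ℝ)..1, h x z) = 0)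
    (ε : ℝ) (hε : 0 < ε) (ω C : ℝ)
    (hω : ∀ x₁ ∈ Icc (0:ℝ) 1, ∀ x₂ ∈ Icc (0:ℝ) 1, ∀ y : ℝ,
      |x₁ - x₂| ≤ ε → ‖h x₁ y - h x₂ y‖ ≤ ω)
    (hC : ∀ x ∈ Icc (0:ℝ) 1, ∀ y : ℝ, ‖h x y‖ ≤ C) :
    ∀ x ∈ Icc (0:ℝ) 1,
      ‖∫ y in (0:ℝ)..x, h y (y / ε)‖ ≤ ε * ((⌊x / ε⌋₊ : ℝ) * ω + C) := by
  intro x ⟨hx0, hx1⟩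
  set N := ⌊x / ε⌋₊
  obtain ⟨hNx, hxN⟩ := floor_div_mul_le_and_lt hx0 hε
  have hslow : ∀ t ∈ Icc (0 : ℝ) 1, Continuous (h t) := fun t ht =>
    continuousOn_univ.mp <| hcont.comp (Continuous.prodMk_right t).continuousOn
      fun _ _ => ⟨ht, mem_univ _⟩
  have hfast : ContinuousOn (fun y => h y (y / ε)) (Icc 0 1) :=
    hcont.comp (continuous_id.prodMk (continuous_id.div_const ε)).continuousOn
      fun _ hy => ⟨hy, mem_univ _⟩
  have hsub : ∀ a ∈ Icc (0 : ℝ) 1, ∀ b ∈ Icc (0 : ℝ) 1,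
      IntervalIntegrable (fun y => h y (y / ε)) volume a b := fun a ha b hb =>
    (hfast.mono (uIcc_subset_Icc ha hb)).intervalIntegrable
  have hcells : ‖∫ y in (0 : ℝ)..N * ε, h y (y / ε)‖ ≤ N * (ε * ω) :=
    norm_integral_cells_le hε.le hfast hslow (fun t ht y => hper t ht y) hmean hω (hNx.trans hx1)
  have hNmem : (N : ℝ) * ε ∈ Icc (0 : ℝ) 1 := ⟨by positivity, hNx.trans hx1⟩
  have hrest : ‖∫ y in N * ε..x, h y (y / ε)‖ ≤ ε * C :=
    norm_integral_le_mul_of_sub_le hNx (by linarith)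
      ((norm_nonneg _).trans (hC 0 (left_mem_Icc.mpr zero_le_one) 0))
      fun y hy => hC y ⟨hNmem.1.trans hy.1.le, hy.2.trans hx1⟩ _
  rw [← intervalIntegral.integral_add_adjacent_intervals (hsub 0 (left_mem_Icc.mpr zero_le_one)
    _ hNmem) (hsub _ hNmem x ⟨hx0, hx1⟩)]
  calc _ ≤ _ := norm_add_le _ _
    _ ≤ N * (ε * ω) + ε * C := add_le_add hcells hrest
    _ = ε * (N * ω + C) := by ring
end

section
/- Let a : ℝⁿ → ℝⁿ satisfy (a(u₁) − a(u₂))·(u₁ − u₂) ≥ m‖u₁ − u₂‖² and ‖a(u₁) − a(u₂)‖ ≤ M‖u₁ − u₂‖ for all u₁, u₂ ∈ ℝⁿ, where M ≥ m > 0. Then a is a bijection from ℝⁿ onto ℝⁿ, and its inverse b := a⁻¹ satisfies (b(v₁) − b(v₂))·(v₁ − v₂) ≥ (m/M²)‖v₁ − v₂‖² and ‖b(v₁) − b(v₂)‖ ≤ (1/m)‖v₁ − v₂‖ for all v₁, v₂ ∈ ℝⁿ. -/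
/-!
Strong monotonicity gives the lower bound `m ‖u₁ - u₂‖ ≤ ‖a u₁ - a u₂‖`, hence injectivity and
the Lipschitz bound `1 / m` for the inverse. For surjectivity onto `y`, the map
`u ↦ u - (m / M²) • (a u - y)` is a contraction with constant `√(1 - m² / M²)`, and its fixed point
solves `a u = y`. Cocoercivity of the inverse is `m ‖u₁ - u₂‖² ≥ (m / M²) ‖a u₁ - a u₂‖²`.
-/

open RealInnerProductSpace

theorem sq_norm_sub_le_of_lipschitz {E F : Type*} [SeminormedAddCommGroup E]
    [SeminormedAddCommGroup F] {a : E → F} {M : ℝ}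
    (hLip : ∀ u₁ u₂, ‖a u₁ - a u₂‖ ≤ M * ‖u₁ - u₂‖) (u₁ u₂ : E) :
    ‖a u₁ - a u₂‖ ^ 2 ≤ M ^ 2 * ‖u₁ - u₂‖ ^ 2 := by
  rw [← mul_pow]
  exact pow_le_pow_left₀ (norm_nonneg _) (hLip u₁ u₂) 2

section StronglyMonotone

variable {E : Type*} [NormedAddCommGroup E] [InnerProductSpace ℝ E] {a : E → E} {m M : ℝ}

theorem mul_norm_sub_le_norm_sub_of_strongMono
    (hmono : ∀ u₁ u₂, ⟪a u₁ - a u₂, u₁ - u₂⟫ ≥ m * ‖u₁ - u₂‖ ^ 2) (u₁ u₂ : E) :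
    m * ‖u₁ - u₂‖ ≤ ‖a u₁ - a u₂‖ := by
  rcases (norm_nonneg (u₁ - u₂)).eq_or_lt with h | h
  · rw [← h, mul_zero]
    exact norm_nonneg _
  · have := (hmono u₁ u₂).trans (real_inner_le_norm (a u₁ - a u₂) (u₁ - u₂))
    rw [sq, ← mul_assoc] at this
    exact le_of_mul_le_mul_right this h

theorem injective_of_strongMono (hm : 0 < m)
    (hmono : ∀ u₁ u₂, ⟪a u₁ - a u₂, u₁ - u₂⟫ ≥ m * ‖u₁ - u₂‖ ^ 2) : Function.Injective a := by
  intro u₁ u₂ h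
  have hle := mul_norm_sub_le_norm_sub_of_strongMono hmono u₁ u₂
  rw [h, sub_self, norm_zero] at hle
  have hdist : ‖u₁ - u₂‖ = 0 := le_antisymm (nonpos_of_mul_nonpos_right hle hm) (norm_nonneg _)
  exact sub_eq_zero.mp (norm_eq_zero.mp hdist)

theorem norm_sub_sub_smul_sq_le {t : ℝ} (ht : 0 ≤ t)
    (hmono : ∀ u₁ u₂, ⟪a u₁ - a u₂, u₁ - u₂⟫ ≥ m * ‖u₁ - u₂‖ ^ 2)
    (hLip : ∀ u₁ u₂, ‖a u₁ - a u₂‖ ≤ M * ‖u₁ - u₂‖) (u₁ u₂ : E) :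
    ‖(u₁ - u₂) - t • (a u₁ - a u₂)‖ ^ 2 ≤ (1 - 2 * t * m + t ^ 2 * M ^ 2) * ‖u₁ - u₂‖ ^ 2 := by
  have hsq := sq_norm_sub_le_of_lipschitz hLip u₁ u₂
  rw [norm_sub_sq_real, inner_smul_right, norm_smul, Real.norm_of_nonneg ht,
    real_inner_comm]
  nlinarith [mul_le_mul_of_nonneg_left hsq (sq_nonneg t),
    mul_le_mul_of_nonneg_left (hmono u₁ u₂) ht]

theorem contractingWith_sub_smul_sub (hm : 0 < m) (hM : 0 < M)
    (hmono : ∀ u₁ u₂, ⟪a u₁ - a u₂, u₁ - u₂⟫ ≥ m * ‖u₁ - u₂‖ ^ 2)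
    (hLip : ∀ u₁ u₂, ‖a u₁ - a u₂‖ ≤ M * ‖u₁ - u₂‖) (y : E) :
    ContractingWith (√(1 - m ^ 2 / M ^ 2)).toNNReal
      (fun u => u - (m / M ^ 2) • (a u - y)) := by
  constructor
  · rw [Real.toNNReal_lt_one, Real.sqrt_lt' one_pos]
    have : 0 < m ^ 2 / M ^ 2 := by positivity
    linarith
  · refine LipschitzWith.of_dist_le_mul fun u₁ u₂ => ?_
    have hsq := norm_sub_sub_smul_sq_le (div_nonneg hm.le (sq_nonneg M)) hmono hLip u₁ u₂
    have hc : 1 - 2 * (m / M ^ 2) * m + (m / M ^ 2) ^ 2 * M ^ 2 = 1 - m ^ 2 / M ^ 2 := by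
      field_simp
      ring
    rw [hc] at hsq
    have := Real.sqrt_le_sqrt hsq
    rw [Real.sqrt_sq (norm_nonneg _), Real.sqrt_mul' _ (sq_nonneg _),
      Real.sqrt_sq (norm_nonneg _)] at this
    have hdiff : u₁ - (m / M ^ 2) • (a u₁ - y) - (u₂ - (m / M ^ 2) • (a u₂ - y)) =
        u₁ - u₂ - (m / M ^ 2) • (a u₁ - a u₂) := by
      module
    rwa [Real.coe_toNNReal _ (Real.sqrt_nonneg _), dist_eq_norm, dist_eq_norm, hdiff]

theorem surjective_of_strongMono_of_lipschitz [CompleteSpace E] (hm : 0 < m) (hM : 0 < M)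
    (hmono : ∀ u₁ u₂, ⟪a u₁ - a u₂, u₁ - u₂⟫ ≥ m * ‖u₁ - u₂‖ ^ 2)
    (hLip : ∀ u₁ u₂, ‖a u₁ - a u₂‖ ≤ M * ‖u₁ - u₂‖) : Function.Surjective a := by
  intro y
  have hT := contractingWith_sub_smul_sub hm hM hmono hLip y
  refine ⟨ContractingWith.fixedPoint _ hT, ?_⟩
  have hfix : (m / M ^ 2) • (a _ - y) = 0 := sub_eq_self.mp hT.fixedPoint_isFixedPt
  exact sub_eq_zero.mp ((smul_eq_zero.mp hfix).resolve_left (by positivity))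

theorem inner_sub_ge_div_sq_mul_norm_sub_sq (hm : 0 ≤ m) (hM : 0 < M)
    (hmono : ∀ u₁ u₂, ⟪a u₁ - a u₂, u₁ - u₂⟫ ≥ m * ‖u₁ - u₂‖ ^ 2)
    (hLip : ∀ u₁ u₂, ‖a u₁ - a u₂‖ ≤ M * ‖u₁ - u₂‖) (u₁ u₂ : E) :
    ⟪u₁ - u₂, a u₁ - a u₂⟫ ≥ m / M ^ 2 * ‖a u₁ - a u₂‖ ^ 2 := by
  have hsq := sq_norm_sub_le_of_lipschitz hLip u₁ u₂
  calc m / M ^ 2 * ‖a u₁ - a u₂‖ ^ 2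
      ≤ m / M ^ 2 * (M ^ 2 * ‖u₁ - u₂‖ ^ 2) := by gcongr
    _ = m * ‖u₁ - u₂‖ ^ 2 := by field_simp
    _ ≤ ⟪u₁ - u₂, a u₁ - a u₂⟫ := real_inner_comm (u₁ - u₂) _ ▸ hmono u₁ u₂

end StronglyMonotone

theorem stmt5 {n : ℕ} (a : EuclideanSpace ℝ (Fin n) → EuclideanSpace ℝ (Fin n))
    (m M : ℝ) (hm : 0 < m) (hmM : m ≤ M)
    (hmono : ∀ u₁ u₂, ⟪a u₁ - a u₂, u₁ - u₂⟫ ≥ m * ‖u₁ - u₂‖ ^ 2)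
    (hLip : ∀ u₁ u₂, ‖a u₁ - a u₂‖ ≤ M * ‖u₁ - u₂‖) :
    Function.Bijective a ∧ ∃ b : EuclideanSpace ℝ (Fin n) → EuclideanSpace ℝ (Fin n),
      (∀ v, a (b v) = v) ∧ (∀ u, b (a u) = u) ∧
      (∀ v₁ v₂, ⟪b v₁ - b v₂, v₁ - v₂⟫ ≥ (m / M ^ 2) * ‖v₁ - v₂‖ ^ 2) ∧
      (∀ v₁ v₂, ‖b v₁ - b v₂‖ ≤ (1 / m) * ‖v₁ - v₂‖) := by
  have hM : 0 < M := hm.trans_le hmM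
  have ha : Function.Bijective a :=
    ⟨injective_of_strongMono hm hmono, surjective_of_strongMono_of_lipschitz hm hM hmono hLip⟩
  have hb := Function.leftInverse_surjInv ha
  refine ⟨ha, Function.surjInv ha.2, Function.surjInv_eq ha.2, hb, ?_, ?_⟩
  · refine ha.2.forall₂.mpr fun u₁ u₂ => ?_
    rw [hb u₁, hb u₂]
    exact inner_sub_ge_div_sq_mul_norm_sub_sq hm.le hM hmono hLip u₁ u₂
  · refine ha.2.forall₂.mpr fun u₁ u₂ => ?_
    rw [hb u₁, hb u₂, one_div, inv_mul_eq_div, le_div_iff₀' hm]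
    exact mul_norm_sub_le_norm_sub_of_strongMono hmono u₁ u₂
end

section
/- Let a : ℝ × ℝⁿ → ℝⁿ, a(y, ·) strongly monotone and Lipschitz with constants M ≥ m > 0 uniformly in y, continuous and 1-periodic in y. Define b(y,·) := a(y,·)⁻¹, b₀(v) := ∫₀¹ b(y, v) dy, and a₀ := b₀⁻¹. Fix v̄ ∈ ℝⁿ and define w(y) := ∫₀^y (b(z, v̄) − b₀(v̄)) dz − ∫₀¹ ∫₀^{z₁} (b(z₂, v̄) − b₀(v̄)) dz₂ dz₁. Then w is 1-periodic, ∫₀¹ w(y) dy = 0, a(y, b₀(v̄) + w'(y)) = v̄ is constant in y, and ∫₀¹ a(y, b₀(v̄) + w'(y)) dy = a₀(b₀(v̄)) = v̄. -/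
/-!
Since `b y` inverts `a y`, the corrector slope `w' = b(·, v̄) - b₀ v̄` gives
`a y (b₀ v̄ + w' y) = v̄` identically. This slope is 1-periodic because `a` is, and has mean
zero because `b₀` is the mean of `b`, so its primitive is periodic; subtracting the mean of that
primitive normalizes `w`. Continuity of `y ↦ b y v̄`, needed for the fundamental theorem of
calculus, follows from the uniform strong monotonicity of `a`.
-/

open RealInnerProductSpace Set

open Filter Topology MeasureTheory Function

theorem mul_norm_le_norm_of_mul_sq_le_inner {E : Type*} [NormedAddCommGroup E]
    [InnerProductSpace ℝ E] {m : ℝ} {x d : E} (h : m * ‖d‖ ^ 2 ≤ ⟪x, d⟫) :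
    m * ‖d‖ ≤ ‖x‖ := by
  rcases (norm_nonneg d).eq_or_lt with hd | hd
  · simp [← hd]
  · refine le_of_mul_le_mul_right ?_ hd
    calc m * ‖d‖ * ‖d‖ = m * ‖d‖ ^ 2 := by ring
      _ ≤ ⟪x, d⟫ := h
      _ ≤ ‖x‖ * ‖d‖ := real_inner_le_norm x d

/-- A uniformly strongly monotone family is uniformly co-Lipschitz, so its inverses
depend continuously on the parameter. -/
theorem continuous_rightInverse_of_stronglyMonotone {X E : Type*} [TopologicalSpace X]
    [NormedAddCommGroup E] [InnerProductSpace ℝ E] {a b : X → E → E} {m : ℝ} (hm : 0 < m)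
    (hmono : ∀ y u₁ u₂, ⟪a y u₁ - a y u₂, u₁ - u₂⟫ ≥ m * ‖u₁ - u₂‖ ^ 2)
    (hcont : ∀ u, Continuous fun y => a y u) (hab : ∀ y, RightInverse (b y) (a y)) (v : E) :
    Continuous fun y => b y v := by
  rw [continuous_iff_continuousAt]
  intro z
  have hbound : ∀ y, ‖b y v - b z v‖ ≤ m⁻¹ * ‖v - a y (b z v)‖ := fun y => by
    have h := mul_norm_le_norm_of_mul_sq_le_inner (hmono y (b y v) (b z v))
    rw [hab y v] at h
    rwa [inv_mul_eq_div, le_div_iff₀' hm]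
  have hlim : Tendsto (fun y => m⁻¹ * ‖v - a y (b z v)‖) (𝓝 z) (𝓝 0) := by
    have h := ((continuous_const (y := v)).sub (hcont (b z v))).norm.const_mul m⁻¹
    simpa [hab z v] using h.tendsto z
  exact tendsto_iff_norm_sub_tendsto_zero.2 (squeeze_zero (fun _ => norm_nonneg _) hbound hlim)

theorem Function.Periodic.of_rightInverse_leftInverse {α β : Type*} [Add α] {T : α}
    {a b : α → β → β} (ha : Periodic a T) (hab : ∀ y, RightInverse (b y) (a y))
    (hba : ∀ y, LeftInverse (b y) (a y)) : Periodic b T := fun y => funext fun v =>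
  calc b (y + T) v = b (y + T) (a (y + T) (b y v)) := by rw [ha y, hab y v]
    _ = b y v := hba (y + T) _

theorem Function.Periodic.primitive_periodic_of_integral_eq_zero {E : Type*}
    [NormedAddCommGroup E] [NormedSpace ℝ E] {f : ℝ → E} {T : ℝ} (hf : Periodic f T)
    (h_int : ∀ t₁ t₂, IntervalIntegrable f volume t₁ t₂)
    (h_mean : ∫ x in 0..T, f x = 0) :
    Periodic (fun y => ∫ x in 0..y, f x) T := fun y => by
  simp only [hf.intervalIntegral_add_eq_add 0 y h_int, zero_add, h_mean, add_zero]

theorem stmt8_general {n : ℕ}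
    (a b : ℝ → EuclideanSpace ℝ (Fin n) → EuclideanSpace ℝ (Fin n))
    (m : ℝ) (hm : 0 < m)
    (hmono : ∀ (y : ℝ) (u₁ u₂ : EuclideanSpace ℝ (Fin n)),
      ⟪a y u₁ - a y u₂, u₁ - u₂⟫ ≥ m * ‖u₁ - u₂‖ ^ 2)
    (hcont : Continuous fun p : ℝ × EuclideanSpace ℝ (Fin n) => a p.1 p.2)
    (hper : ∀ (y : ℝ) (v : EuclideanSpace ℝ (Fin n)), a (y + 1) v = a y v)
    (hab : ∀ (y : ℝ) (v : EuclideanSpace ℝ (Fin n)), a y (b y v) = v)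
    (hba : ∀ (y : ℝ) (v : EuclideanSpace ℝ (Fin n)), b y (a y v) = v)
    (b₀ : EuclideanSpace ℝ (Fin n) → EuclideanSpace ℝ (Fin n))
    (hb₀ : ∀ v, b₀ v = ∫ y in (0:ℝ)..1, b y v)
    (a₀ : EuclideanSpace ℝ (Fin n) → EuclideanSpace ℝ (Fin n))
    (ha₀ : ∀ v, a₀ (b₀ v) = v ∧ b₀ (a₀ v) = v)
    (vbar : EuclideanSpace ℝ (Fin n)) (w : ℝ → EuclideanSpace ℝ (Fin n))
    (hw : ∀ y : ℝ, w y = (∫ z in (0:ℝ)..y, (b z vbar - b₀ vbar))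
      - ∫ z₁ in (0:ℝ)..1, ∫ z₂ in (0:ℝ)..z₁, (b z₂ vbar - b₀ vbar)) :
    (∀ y : ℝ, w (y + 1) = w y) ∧
    (∫ y in (0:ℝ)..1, w y) = 0 ∧
    (∀ y : ℝ, HasDerivAt w (b y vbar - b₀ vbar) y) ∧
    (∀ y : ℝ, a y (b₀ vbar + (b y vbar - b₀ vbar)) = vbar) ∧
    (∫ y in (0:ℝ)..1, a y (b₀ vbar + (b y vbar - b₀ vbar))) = vbar ∧
    a₀ (b₀ vbar) = vbar := by
  have hb_per : Periodic (fun y => b y vbar) 1 := fun y =>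
    congrFun (Periodic.of_rightInverse_leftInverse (fun y => funext (hper y)) hab hba y) vbar
  have hb_cont : Continuous fun y => b y vbar := continuous_rightInverse_of_stronglyMonotone hm
    hmono (fun _ => hcont.comp (continuous_id.prodMk continuous_const)) hab vbar
  have hf_cont : Continuous fun y => b y vbar - b₀ vbar := hb_cont.sub continuous_const
  have hf_mean : ∫ y in (0:ℝ)..1, (b y vbar - b₀ vbar) = 0 := by
    rw [intervalIntegral.integral_sub (hb_cont.intervalIntegrable 0 1) intervalIntegrable_const,
      ← hb₀]
    simp
  have hF_per : Periodic (fun y => ∫ z in (0:ℝ)..y, (b z vbar - b₀ vbar)) 1 :=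
    Periodic.primitive_periodic_of_integral_eq_zero (fun y => by simp only [hb_per y])
      hf_cont.intervalIntegrable hf_mean
  have hcell : ∀ y, a y (b₀ vbar + (b y vbar - b₀ vbar)) = vbar := fun y => by
    rw [add_sub_cancel, hab]
  refine ⟨fun y => ?_, ?_, fun y => ?_, hcell, ?_, (ha₀ vbar).1⟩
  · rw [hw, hw]
    exact congrArg (· - _) (hF_per y)
  · simp only [hw]
    rw [intervalIntegral.integral_sub
      ((intervalIntegral.continuous_primitive hf_cont.intervalIntegrable 0).intervalIntegrable 0 1)
      intervalIntegrable_const]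
    simp
  · simp only [funext hw]
    exact (hf_cont.integral_hasStrictDerivAt 0 y).hasDerivAt.sub_const _
  · rw [intervalIntegral.integral_congr fun y _ => hcell y]
    simp

theorem stmt8 {n : ℕ}
    (a b : ℝ → EuclideanSpace ℝ (Fin n) → EuclideanSpace ℝ (Fin n))
    (m M : ℝ) (hm : 0 < m) (hmM : m ≤ M)
    (hmono : ∀ (y : ℝ) (u₁ u₂ : EuclideanSpace ℝ (Fin n)),
      ⟪a y u₁ - a y u₂, u₁ - u₂⟫ ≥ m * ‖u₁ - u₂‖ ^ 2)
    (hLip : ∀ (y : ℝ) (u₁ u₂ : EuclideanSpace ℝ (Fin n)),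
      ‖a y u₁ - a y u₂‖ ≤ M * ‖u₁ - u₂‖)
    (hcont : Continuous fun p : ℝ × EuclideanSpace ℝ (Fin n) => a p.1 p.2)
    (hper : ∀ (y : ℝ) (v : EuclideanSpace ℝ (Fin n)), a (y + 1) v = a y v)
    (hab : ∀ (y : ℝ) (v : EuclideanSpace ℝ (Fin n)), a y (b y v) = v)
    (hba : ∀ (y : ℝ) (v : EuclideanSpace ℝ (Fin n)), b y (a y v) = v)
    (b₀ : EuclideanSpace ℝ (Fin n) → EuclideanSpace ℝ (Fin n))
    (hb₀ : ∀ v, b₀ v = ∫ y in (0:ℝ)..1, b y v)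
    (a₀ : EuclideanSpace ℝ (Fin n) → EuclideanSpace ℝ (Fin n))
    (ha₀ : ∀ v, a₀ (b₀ v) = v ∧ b₀ (a₀ v) = v)
    (vbar : EuclideanSpace ℝ (Fin n)) (w : ℝ → EuclideanSpace ℝ (Fin n))
    (hw : ∀ y : ℝ, w y = (∫ z in (0:ℝ)..y, (b z vbar - b₀ vbar))
      - ∫ z₁ in (0:ℝ)..1, ∫ z₂ in (0:ℝ)..z₁, (b z₂ vbar - b₀ vbar)) :
    (∀ y : ℝ, w (y + 1) = w y) ∧
    (∫ y in (0:ℝ)..1, w y) = 0 ∧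
    (∀ y : ℝ, HasDerivAt w (b y vbar - b₀ vbar) y) ∧
    (∀ y : ℝ, a y (b₀ vbar + (b y vbar - b₀ vbar)) = vbar) ∧
    (∫ y in (0:ℝ)..1, a y (b₀ vbar + (b y vbar - b₀ vbar))) = vbar ∧
    a₀ (b₀ vbar) = vbar :=
  stmt8_general a b m hm hmono hcont hper hab hba b₀ hb₀ a₀ ha₀ vbar w hw
end

section
/- Let A : ℝ → GL(n, ℝ) assign to each y an invertible n×n matrix, continuous and 1-periodic in y, and let ā : ℝ → ℝⁿ be continuous and 1-periodic. Define the affine maps a(y, u') := A(y)u' + ā(y) and assume each a(y, ·) is strongly monotone and Lipschitz uniformly in y. Then the homogenized map a₀(u') := (∫₀¹ b(y, u') dy)⁻¹-inverse construction (with b(y,·) = a(y,·)⁻¹) is again affine: a₀(u') = A₀ u' + ā₀ with A₀ = (∫₀¹ A(y)⁻¹ dy)⁻¹ and ā₀ = (∫₀¹ A(y)⁻¹ dy)⁻¹ ∫₀¹ A(y)⁻¹ ā(y) dy. -/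
open Matrix

theorem stmt9 {n : ℕ} (A : ℝ → Matrix (Fin n) (Fin n) ℝ) (abar : ℝ → Fin n → ℝ)
    (hAcont : Continuous A) (hAper : ∀ y, A (y + 1) = A y)
    (hAunit : ∀ y, IsUnit (A y))
    (habarcont : Continuous abar) (habarper : ∀ y, abar (y + 1) = abar y)
    (m M : ℝ) (hm : 0 < m) (hmM : m ≤ M)
    (hmono : ∀ (y : ℝ) (d : Fin n → ℝ), ((A y) *ᵥ d) ⬝ᵥ d ≥ m * (d ⬝ᵥ d))
    (hLip : ∀ (y : ℝ) (d : Fin n → ℝ), ((A y) *ᵥ d) ⬝ᵥ ((A y) *ᵥ d) ≤ M ^ 2 * (d ⬝ᵥ d))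
    (b₀ : (Fin n → ℝ) → Fin n → ℝ)
    (hb₀ : ∀ (v : Fin n → ℝ) (i : Fin n),
      b₀ v i = ∫ y in (0:ℝ)..1, ((A y)⁻¹ *ᵥ (v - abar y)) i)
    (a₀ : (Fin n → ℝ) → Fin n → ℝ)
    (ha₀ : ∀ v : Fin n → ℝ, a₀ (b₀ v) = v ∧ b₀ (a₀ v) = v) :
    IsUnit (Matrix.of fun i j : Fin n => ∫ y in (0:ℝ)..1, (A y)⁻¹ i j) ∧
    ∀ u' : Fin n → ℝ,
      a₀ u' = ((Matrix.of fun i j : Fin n => ∫ y in (0:ℝ)..1, (A y)⁻¹ i j)⁻¹ *ᵥ u')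
        + ((Matrix.of fun i j : Fin n => ∫ y in (0:ℝ)..1, (A y)⁻¹ i j)⁻¹ *ᵥ
            (fun i => ∫ y in (0:ℝ)..1, ((A y)⁻¹ *ᵥ abar y) i)) := by
  -- continuity of y ↦ (A y)⁻¹
  have hdet : Continuous fun y => (A y).det := hAcont.matrix_det
  have hdetne : ∀ y, (A y).det ≠ 0 := fun y =>
    IsUnit.ne_zero ((isUnit_iff_isUnit_det (A y)).1 (hAunit y))
  have hInv : Continuous fun y => (A y)⁻¹ := by
    have : Continuous fun y => ((A y).det)⁻¹ • (A y).adjugate :=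
      (hdet.inv₀ hdetne).smul hAcont.matrix_adjugate
    simpa only [Matrix.inv_def, Ring.inverse_eq_inv'] using this
  have hInvEntry : ∀ i j, Continuous fun y => (A y)⁻¹ i j := fun i j =>
    (continuous_apply j).comp ((continuous_apply i).comp hInv)
  set B : Matrix (Fin n) (Fin n) ℝ :=
    Matrix.of fun i j : Fin n => ∫ y in (0:ℝ)..1, (A y)⁻¹ i j with hB
  set c : Fin n → ℝ := fun i => ∫ y in (0:ℝ)..1, ((A y)⁻¹ *ᵥ abar y) i with hc
  have hvcont : ∀ (v : Fin n → ℝ) (i : Fin n),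
      Continuous fun y => ((A y)⁻¹ *ᵥ v) i := by
    intro v i
    simp only [Matrix.mulVec, dotProduct]
    exact continuous_finset_sum _ fun j _ => (hInvEntry i j).mul continuous_const
  have habcont : ∀ i, Continuous fun y => ((A y)⁻¹ *ᵥ abar y) i := by
    intro i
    simp only [Matrix.mulVec, dotProduct]
    exact continuous_finset_sum _ fun j _ =>
      (hInvEntry i j).mul ((continuous_apply j).comp habarcont)
  -- b₀ v = B *ᵥ v - c
  have hkey : ∀ v : Fin n → ℝ, b₀ v = B *ᵥ v - c := by
    intro v
    funext i
    rw [hb₀]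
    have h1 : (fun y => ((A y)⁻¹ *ᵥ (v - abar y)) i)
        = fun y => ((A y)⁻¹ *ᵥ v) i - ((A y)⁻¹ *ᵥ abar y) i := by
      funext y
      rw [Matrix.mulVec_sub, Pi.sub_apply]
    rw [h1, intervalIntegral.integral_sub
        ((hvcont v i).intervalIntegrable _ _) ((habcont i).intervalIntegrable _ _)]
    have h2 : ∫ y in (0:ℝ)..1, ((A y)⁻¹ *ᵥ v) i = (B *ᵥ v) i := by
      simp only [Matrix.mulVec, dotProduct]
      rw [intervalIntegral.integral_finset_sum]
      · refine Finset.sum_congr rfl fun j _ => ?_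
        rw [intervalIntegral.integral_mul_const]
        rfl
      · intro j _
        exact ((hInvEntry i j).mul continuous_const).intervalIntegrable _ _
    rw [h2]
    rfl
  -- B is a unit since b₀ is injective
  have hinj : Function.Injective (B.mulVec) := by
    intro v w hvw
    have : b₀ v = b₀ w := by rw [hkey, hkey, hvw]
    calc v = a₀ (b₀ v) := ((ha₀ v).1).symm
      _ = a₀ (b₀ w) := by rw [this]
      _ = w := (ha₀ w).1
  have hBunit : IsUnit B := Matrix.mulVec_injective_iff_isUnit.1 hinj
  refine ⟨hBunit, fun u' => ?_⟩
  have h3 : b₀ (a₀ u') = u' := (ha₀ u').2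
  rw [hkey] at h3
  have h4 : B *ᵥ a₀ u' = u' + c := sub_eq_iff_eq_add.mp h3
  have := congrArg (fun w => B⁻¹ *ᵥ w) h4
  rwa [Matrix.mulVec_mulVec, Matrix.nonsing_inv_mul B
      ((Matrix.isUnit_iff_isUnit_det B).1 hBunit), Matrix.one_mulVec,
    Matrix.mulVec_add] at this
end

section
/- Let ε > 0 and let u_ε : [0,1] → ℝ solve the boundary value problem (u'(x)/(2 + sin(2πx/ε)))' = 1 for x ∈ [0,1], u(0) = 0, u'(1) = u¹. Then u_ε(x) = ∫₀ˣ (2 + sin(2πy/ε))(u¹/(2 + sin(2π/ε)) + y − 1) dy; in particular u_ε(1) = −1 + 2u¹/(2 + sin(2π/ε)) + O(ε) as ε → 0, so if u¹ ≠ 0 then u_ε(1) does not converge as ε → 0. -/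
open Set Filter Topology

/-! Writing a(x) = 2 + sin(2πx/ε), the ODE says u'/a has slope 1, and u'(1) = u¹ pins it
down: u' = a·(u¹/a(1) + x − 1); integrating from u(0) = 0 gives the formula for u_ε. At x = 1
the non-oscillating part integrates to −1 + 2u¹/a(1), while integrating the oscillating part
sin(2πy/ε)·(c + y − 1) by parts gains a factor ε. Along ε = 1/(k ± 1/4) one has
sin(2π/ε) = ±1, so a limit L of u_ε(1) would equal both −1 + 2u¹/3 and −1 + 2u¹,
forcing u¹ = 0. -/

lemma eq_add_mul_sub_of_hasDerivWithinAt_Icc {f : ℝ → ℝ} {a b c : ℝ}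
    (hf : ∀ x ∈ Icc a b, HasDerivWithinAt f c (Icc a b) x) :
    ∀ x ∈ Icc a b, f x = f a + c * (x - a) := by
  have hline : ∀ x, HasDerivAt (fun x => f a + c * (x - a)) c x := fun x => by
    simpa using ((hasDerivAt_id x).sub_const a).const_mul c |>.const_add (f a)
  refine eq_of_has_deriv_right_eq (f' := fun _ => c)
    (fun x hx => (hf x (Ico_subset_Icc_self hx)).mono_of_mem_nhdsWithin (Icc_mem_nhdsGE_of_mem hx))
    (fun x _ => (hline x).hasDerivWithinAt)
    (fun x hx => (hf x hx).continuousWithinAt)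
    (fun x _ => (hline x).continuousAt.continuousWithinAt) (by ring)

lemma eq_mul_of_hasDerivWithinAt_div_Icc {g w : ℝ → ℝ} {a b gb : ℝ}
    (hw : ∀ x ∈ Icc a b, w x ≠ 0)
    (hdiv : ∀ x ∈ Icc a b, HasDerivWithinAt (fun t => g t / w t) 1 (Icc a b) x)
    (hgb : g b = gb) :
    ∀ x ∈ Icc a b, g x = w x * (gb / w b + x - b) := by
  intro x hx
  have hab : a ≤ b := hx.1.trans hx.2
  have hx' := eq_add_mul_sub_of_hasDerivWithinAt_Icc hdiv x hx
  have hb' := eq_add_mul_sub_of_hasDerivWithinAt_Icc hdiv b ⟨hab, le_rfl⟩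
  have hquot : g x / w x = gb / w b + x - b := by rw [← hgb]; linarith
  rw [← hquot, mul_div_cancel₀ _ (hw x hx)]

lemma eq_add_integral_of_hasDerivWithinAt_Icc {f g : ℝ → ℝ} {a b : ℝ}
    (hf : ∀ x ∈ Icc a b, HasDerivWithinAt f (g x) (Icc a b) x) (hg : ContinuousOn g (Icc a b)) :
    ∀ x ∈ Icc a b, f x = f a + ∫ y in a..x, g y := by
  intro x hx
  have hsub : Icc a x ⊆ Icc a b := Icc_subset_Icc_right hx.2
  rw [intervalIntegral.integral_eq_sub_of_hasDerivAt_of_le hx.1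
    (fun y hy => (hf y (hsub hy)).continuousWithinAt.mono hsub)
    (fun y hy => (hf y (hsub (Ioo_subset_Icc_self hy))).hasDerivAt
      (Icc_mem_nhds hy.1 (hy.2.trans_le hx.2)))
    ((hg.mono hsub).intervalIntegrable_of_Icc hx.1)]
  ring

lemma eq_integral_of_hasDerivWithinAt_div_Icc {u u' w : ℝ → ℝ} {a b ub : ℝ}
    (hw : ∀ x ∈ Icc a b, w x ≠ 0) (hwc : ContinuousOn w (Icc a b))
    (hu : ∀ x ∈ Icc a b, HasDerivWithinAt u (u' x) (Icc a b) x)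
    (hdiv : ∀ x ∈ Icc a b, HasDerivWithinAt (fun t => u' t / w t) 1 (Icc a b) x)
    (hub : u' b = ub) :
    ∀ x ∈ Icc a b, u x = u a + ∫ y in a..x, w y * (ub / w b + y - b) := by
  have hu' := eq_mul_of_hasDerivWithinAt_div_Icc hw hdiv hub
  refine eq_add_integral_of_hasDerivWithinAt_Icc (fun x hx => hu' x hx ▸ hu x hx) ?_
  exact hwc.mul ((continuousOn_const.add continuousOn_id).sub continuousOn_const)

lemma one_le_two_add_sin (x : ℝ) : 1 ≤ 2 + Real.sin x := by
  linarith [Real.neg_one_le_sin x]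

lemma two_add_sin_pos (x : ℝ) : 0 < 2 + Real.sin x := by
  linarith [one_le_two_add_sin x]

lemma integral_two_add_sin_mul {ω : ℝ} (hω : ω ≠ 0) (c : ℝ) :
    ∫ y in (0:ℝ)..1, (2 + Real.sin (ω * y)) * (c + y - 1) =
      2 * c - 1 + (c - 1 - c * Real.cos ω) / ω + Real.sin ω / ω ^ 2 := by
  have hF : ∀ y, HasDerivAt (fun y => 2 * (c * y + y ^ 2 / 2 - y)
      - (c + y - 1) * Real.cos (ω * y) / ω + Real.sin (ω * y) / ω ^ 2)
      ((2 + Real.sin (ω * y)) * (c + y - 1)) y := by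
    intro y
    have hωy : HasDerivAt (fun y => ω * y) ω y := by simpa using (hasDerivAt_id y).const_mul ω
    have hpoly : HasDerivAt (fun y => 2 * (c * y + y ^ 2 / 2 - y)) (2 * (c + y - 1)) y :=
      ((((hasDerivAt_id y).const_mul c).add ((hasDerivAt_pow 2 y).div_const 2)).sub
        (hasDerivAt_id y)).const_mul 2 |>.congr_deriv (by simp)
    have hlin : HasDerivAt (fun y => c + y - 1) 1 y := ((hasDerivAt_id y).const_add c).sub_const 1
    exact (hpoly.sub ((hlin.mul hωy.cos).div_const ω)).add (hωy.sin.div_const (ω ^ 2))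
      |>.congr_deriv (by field_simp; ring)
  rw [intervalIntegral.integral_eq_sub_of_hasDerivAt (fun y _ => hF y)
    (by apply Continuous.intervalIntegrable; fun_prop)]
  simp only [mul_zero, mul_one, Real.cos_zero, Real.sin_zero]
  ring

lemma abs_integral_two_add_sin_mul_sub_le {ω : ℝ} (hω : 1 ≤ ω) (c : ℝ) :
    |(∫ y in (0:ℝ)..1, (2 + Real.sin (ω * y)) * (c + y - 1)) - (2 * c - 1)| ≤
      2 * (|c| + 1) / ω := by
  have hω0 : 0 < ω := one_pos.trans_le hω
  rw [integral_two_add_sin_mul hω0.ne', add_sub_right_comm, add_sub_cancel_left]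
  have hcos : |c - 1 - c * Real.cos ω| ≤ 2 * |c| + 1 := by
    calc |c - 1 - c * Real.cos ω| ≤ |c| + 1 + |c| * |Real.cos ω| := by
          rw [← abs_mul]; exact (abs_sub _ _).trans (by gcongr; simpa using abs_sub c 1)
      _ ≤ 2 * |c| + 1 := by nlinarith [Real.abs_cos_le_one ω, abs_nonneg c]
  have hsin : |Real.sin ω / ω ^ 2| ≤ 1 / ω := by
    rw [abs_div, abs_of_pos (by positivity : 0 < ω ^ 2), div_le_div_iff₀ (by positivity) hω0]
    nlinarith [Real.abs_sin_le_one ω]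
  calc _ ≤ |(c - 1 - c * Real.cos ω) / ω| + |Real.sin ω / ω ^ 2| := abs_add_le _ _
    _ ≤ (2 * |c| + 1) / ω + 1 / ω := by
        rw [abs_div, abs_of_pos hω0]; gcongr
    _ = 2 * (|c| + 1) / ω := by ring

lemma abs_integral_two_add_sin_div_sub_le {ε : ℝ} (hε : 0 < ε) (hε1 : ε ≤ 1) (u1 : ℝ) :
    |(∫ y in (0:ℝ)..1, (2 + Real.sin (2 * Real.pi * y / ε)) *
        (u1 / (2 + Real.sin (2 * Real.pi / ε)) + y - 1)) -
      (-1 + 2 * u1 / (2 + Real.sin (2 * Real.pi / ε)))| ≤ (|u1| + 1) * ε := by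
  set c := u1 / (2 + Real.sin (2 * Real.pi / ε))
  have hω : 1 ≤ 2 * Real.pi / ε := by
    rw [le_div_iff₀ hε]; linarith [Real.pi_gt_three]
  have hc : |c| ≤ |u1| := by
    rw [abs_div, abs_of_pos (two_add_sin_pos _)]
    exact div_le_self (abs_nonneg _) (one_le_two_add_sin _)
  have h := abs_integral_two_add_sin_mul_sub_le hω c
  simp only [← mul_div_right_comm] at h
  rw [show -1 + 2 * u1 / (2 + Real.sin (2 * Real.pi / ε)) = 2 * c - 1 by rw [mul_div_assoc]; ring]
  calc _ ≤ 2 * (|c| + 1) / (2 * Real.pi / ε) := h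
    _ = (|c| + 1) * ε / Real.pi := by field_simp
    _ ≤ (|c| + 1) * ε := div_le_self (by positivity) (by linarith [Real.pi_gt_three])
    _ ≤ (|u1| + 1) * ε := by gcongr

lemma tendsto_inv_natCast_add_nhdsGT_zero (a : ℝ) :
    Tendsto (fun k : ℕ => ((k : ℝ) + a)⁻¹) atTop (𝓝[>] 0) :=
  tendsto_inv_atTop_nhdsGT_zero.comp
    (tendsto_atTop_add_const_right _ a tendsto_natCast_atTop_atTop)

lemma sin_two_pi_div_inv_natCast_add (k : ℕ) (a : ℝ) :
    Real.sin (2 * Real.pi / ((k : ℝ) + a)⁻¹) = Real.sin (2 * Real.pi * a) := by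
  rw [div_inv_eq_mul, mul_add, add_comm, ← Real.sin_add_nat_mul_two_pi (2 * Real.pi * a) k]
  ring_nf

lemma tendsto_sub_nhds_zero_of_abs_sub_le_mul {f g : ℝ → ℝ} {C ε₀ : ℝ} (hε₀ : 0 < ε₀)
    (h : ∀ ε ∈ Ioc 0 ε₀, |f ε - g ε| ≤ C * ε) :
    Tendsto (fun ε => f ε - g ε) (𝓝[>] 0) (𝓝 0) := by
  refine squeeze_zero_norm' ?_ (by simpa using (tendsto_nhdsWithin_of_tendsto_nhds
    ((continuous_const_mul C).tendsto 0)))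
  filter_upwards [Ioc_mem_nhdsGT hε₀] with ε hε using h ε hε

lemma eq_of_tendsto_of_tendsto_sub_of_comp_eq {α E : Type*} [TopologicalSpace E] [AddCommGroup E]
    [IsTopologicalAddGroup E] [T2Space E] {l : Filter α} {f g : α → E} {L v : E}
    {s : ℕ → α} (hf : Tendsto f l (𝓝 L)) (hfg : Tendsto (fun x => f x - g x) l (𝓝 0))
    (hs : Tendsto s atTop l) (hgs : ∀ k, g (s k) = v) : L = v := by
  have h : Tendsto (fun k => g (s k)) atTop (𝓝 (L - 0)) := by
    simpa only [Function.comp_def, sub_sub_cancel] using (hf.comp hs).sub (hfg.comp hs)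
  simp only [hgs, sub_zero] at h
  exact (tendsto_const_nhds_iff.mp h).symm

theorem stmt10_general (u u' : ℝ → ℝ → ℝ) (u1 : ℝ)
    (hderiv : ∀ ε > (0:ℝ), ∀ x ∈ Icc (0:ℝ) 1,
      HasDerivWithinAt (u ε) (u' ε x) (Icc 0 1) x)
    (hODE : ∀ ε > (0:ℝ), ∀ x ∈ Icc (0:ℝ) 1,
      HasDerivWithinAt (fun t => u' ε t / (2 + Real.sin (2 * Real.pi * t / ε)))
        1 (Icc 0 1) x)
    (hbc0 : ∀ ε > (0:ℝ), u ε 0 = 0)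
    (hbc1 : ∀ ε > (0:ℝ), u' ε 1 = u1) :
    (∀ ε > (0:ℝ), ∀ x ∈ Icc (0:ℝ) 1,
      u ε x = ∫ y in (0:ℝ)..x, (2 + Real.sin (2 * Real.pi * y / ε)) *
        (u1 / (2 + Real.sin (2 * Real.pi / ε)) + y - 1)) ∧
    (∃ C > (0:ℝ), ∃ ε₀ > (0:ℝ), ∀ ε ∈ Ioc (0:ℝ) ε₀,
      |u ε 1 - (-1 + 2 * u1 / (2 + Real.sin (2 * Real.pi / ε)))| ≤ C * ε) ∧
    (u1 ≠ 0 → ¬ ∃ L : ℝ, Tendsto (fun ε => u ε 1) (𝓝[>] 0) (𝓝 L)) := by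
  have hformula : ∀ ε > (0:ℝ), ∀ x ∈ Icc (0:ℝ) 1,
      u ε x = ∫ y in (0:ℝ)..x, (2 + Real.sin (2 * Real.pi * y / ε)) *
        (u1 / (2 + Real.sin (2 * Real.pi / ε)) + y - 1) := by
    intro ε hε x hx
    have h := eq_integral_of_hasDerivWithinAt_div_Icc (fun x _ => (two_add_sin_pos _).ne')
      (by fun_prop) (hderiv ε hε) (hODE ε hε) (hbc1 ε hε) x hx
    rwa [hbc0 ε hε, zero_add, mul_one] at h
  have hbound : ∀ ε ∈ Ioc (0:ℝ) 1,
      |u ε 1 - (-1 + 2 * u1 / (2 + Real.sin (2 * Real.pi / ε)))| ≤ (|u1| + 1) * ε := by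
    intro ε hε
    rw [hformula ε hε.1 1 (right_mem_Icc.2 zero_le_one)]
    exact abs_integral_two_add_sin_div_sub_le hε.1 hε.2 u1
  refine ⟨hformula, ⟨|u1| + 1, by positivity, 1, one_pos, hbound⟩, ?_⟩
  rintro hu1 ⟨L, hL⟩
  have hlim (a : ℝ) : L = -1 + 2 * u1 / (2 + Real.sin (2 * Real.pi * a)) :=
    eq_of_tendsto_of_tendsto_sub_of_comp_eq hL
      (tendsto_sub_nhds_zero_of_abs_sub_le_mul one_pos hbound)
      (tendsto_inv_natCast_add_nhdsGT_zero a) (fun k => by rw [sin_two_pi_div_inv_natCast_add])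
  have hquarter := hlim (1 / 4)
  rw [hlim (-(1 / 4)), mul_neg, Real.sin_neg, show 2 * Real.pi * (1 / 4) = Real.pi / 2 by ring,
    Real.sin_pi_div_two] at hquarter
  exact hu1 (by linarith)

theorem stmt10 (u u' : ℝ → ℝ → ℝ) (u1 : ℝ)
    (hderiv : ∀ ε > (0:ℝ), ∀ x ∈ Icc (0:ℝ) 1,
      HasDerivWithinAt (u ε) (u' ε x) (Icc 0 1) x)
    (hcont : ∀ ε > (0:ℝ), ContinuousOn (u' ε) (Icc 0 1))
    (hODE : ∀ ε > (0:ℝ), ∀ x ∈ Icc (0:ℝ) 1,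
      HasDerivWithinAt (fun t => u' ε t / (2 + Real.sin (2 * Real.pi * t / ε)))
        1 (Icc 0 1) x)
    (hbc0 : ∀ ε > (0:ℝ), u ε 0 = 0)
    (hbc1 : ∀ ε > (0:ℝ), u' ε 1 = u1) :
    (∀ ε > (0:ℝ), ∀ x ∈ Icc (0:ℝ) 1,
      u ε x = ∫ y in (0:ℝ)..x, (2 + Real.sin (2 * Real.pi * y / ε)) *
        (u1 / (2 + Real.sin (2 * Real.pi / ε)) + y - 1)) ∧
    (∃ C > (0:ℝ), ∃ ε₀ > (0:ℝ), ∀ ε ∈ Ioc (0:ℝ) ε₀,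
      |u ε 1 - (-1 + 2 * u1 / (2 + Real.sin (2 * Real.pi / ε)))| ≤ C * ε) ∧
    (u1 ≠ 0 → ¬ ∃ L : ℝ, Tendsto (fun ε => u ε 1) (𝓝[>] 0) (𝓝 L)) :=
  stmt10_general u u' u1 hderiv hODE hbc0 hbc1
end

section
/- Let ε > 0, a, f : [0,1] × ℝ × ℝⁿ × ℝⁿ → ℝⁿ continuous, with a(x,y,u,·) bijective for ‖u‖ ≤ 1 and inverse b(x,y,u,·). Suppose u ∈ C¹([0,1]; ℝⁿ) with ‖u‖_∞ < 1 satisfies u(0) = 0 and the variational equation ∫₀¹ (a(x, x/ε, u(x), u'(x))·φ'(x) + f(x, x/ε, u(x), u'(x))·φ(x)) dx = 0 for all φ ∈ C¹([0,1]; ℝⁿ) with φ(0) = 0. Define v(x) := a(x, x/ε, u(x), u'(x)). Then v ∈ C¹, u(x) = ∫₀ˣ b(y, y/ε, u(y), v(y)) dy and v(x) = −∫ₓ¹ f(y, y/ε, u(y), b(y, y/ε, u(y), v(y))) dy for all x ∈ [0,1]. -/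
/-!
Let `g(x) = f(x, x/ε, u(x), u'(x))` and `G(x) = ∫₁ˣ g`. Integrating `⟪G, φ⟫` by parts, the
variational equation becomes `∫₀¹ ⟪v - G, φ'⟫ = 0` for every test function `φ` with `φ(0) = 0`.
Testing with `φ(x) = ∫₀ˣ (v - G)` gives `∫₀¹ ‖v - G‖² = 0`, so `v = G` on `[0, 1]`: this is the
formula for `v`, and `v' = g`. Since `‖u‖ < 1`, `b(x, x/ε, u, ·)` inverts `a(x, x/ε, u, ·)`, so
`b(x, x/ε, u(x), v(x)) = u'(x)` and the formula for `u` is the fundamental theorem of calculus.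
-/

open RealInnerProductSpace Set MeasureTheory intervalIntegral

section Calculus

variable {E : Type*} [NormedAddCommGroup E] [NormedSpace ℝ E] [CompleteSpace E] {a b : ℝ}

theorem integral_eq_sub_of_hasDerivWithinAt_Icc {F F' : ℝ → E} (hab : a ≤ b)
    (hd : ∀ x ∈ Icc a b, HasDerivWithinAt F (F' x) (Icc a b) x)
    (hc : ContinuousOn F' (Icc a b)) :
    ∫ x in a..b, F' x = F b - F a :=
  integral_eq_sub_of_hasDerivAt_of_le hab (fun x hx => (hd x hx).continuousWithinAt)
    (fun x hx => (hd x (Ioo_subset_Icc_self hx)).hasDerivAt (Icc_mem_nhds hx.1 hx.2))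
    (hc.intervalIntegrable_of_Icc hab)

theorem hasDerivWithinAt_integral_Icc {g : ℝ → E} {c x : ℝ} (hg : ContinuousOn g (Icc a b))
    (hc : c ∈ Icc a b) (hx : x ∈ Icc a b) :
    HasDerivWithinAt (fun t => ∫ y in c..t, g y) (g x) (Icc a b) x := by
  have hab : a ≤ b := hc.1.trans hc.2
  set G := IccExtend hab ((Icc a b).domRestrict g)
  have hG : Continuous G := hg.domRestrict.Icc_extend'
  have hGg : EqOn G g (Icc a b) := fun y hy => IccExtend_of_mem hab _ hy
  have hderiv := (hG.integral_hasStrictDerivAt c x).hasDerivAt.hasDerivWithinAt (s := Icc a b)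
  rw [hGg hx] at hderiv
  exact hderiv.congr
    (fun t ht => integral_congr fun y hy => (hGg (uIcc_subset_Icc hc ht hy)).symm)
    (integral_congr fun y hy => (hGg (uIcc_subset_Icc hc hx hy)).symm)

end Calculus

section Variational

variable {E : Type*} [NormedAddCommGroup E] [InnerProductSpace ℝ E] {a b : ℝ}

theorem eqOn_zero_of_integral_inner_self_eq_zero {h : ℝ → E} (hab : a < b)
    (hh : ContinuousOn h (Icc a b)) (hint : ∫ x in a..b, ⟪h x, h x⟫ = 0) :
    EqOn h 0 (Icc a b) := by
  have hq : ContinuousOn (fun x => ⟪h x, h x⟫) (Icc a b) := hh.inner hh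
  have hae : (fun x => ⟪h x, h x⟫) =ᵐ[volume.restrict (Icc a b)] 0 := by
    rwa [← Measure.restrict_congr_set Ioc_ae_eq_Icc,
      ← integral_eq_zero_iff_of_le_of_nonneg_ae hab.le
        (ae_of_all _ fun _ => real_inner_self_nonneg) (hq.intervalIntegrable_of_Icc hab.le)]
  exact fun x hx => inner_self_eq_zero.mp
    (Measure.eqOn_Icc_of_ae_eq volume hab.ne hae hq continuousOn_const hx)

/-- The du Bois-Reymond lemma. -/
theorem eqOn_zero_of_forall_integral_inner_deriv_eq_zero [CompleteSpace E] {h : ℝ → E}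
    (hab : a < b) (hh : ContinuousOn h (Icc a b))
    (H : ∀ φ φ' : ℝ → E, (∀ x ∈ Icc a b, HasDerivWithinAt φ (φ' x) (Icc a b) x) →
      ContinuousOn φ' (Icc a b) → φ a = 0 → ∫ x in a..b, ⟪h x, φ' x⟫ = 0) :
    EqOn h 0 (Icc a b) :=
  eqOn_zero_of_integral_inner_self_eq_zero hab hh <|
    H _ h (fun _ hx => hasDerivWithinAt_integral_Icc hh (left_mem_Icc.2 hab.le) hx) hh
      integral_same

/-- A weak solution of `v' = g` with natural boundary condition `v(b) = 0` is `∫_b^x g`. -/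
theorem eqOn_integral_of_forall_integral_inner_eq_zero [CompleteSpace E] {v g : ℝ → E}
    (hab : a < b) (hv : ContinuousOn v (Icc a b)) (hg : ContinuousOn g (Icc a b))
    (H : ∀ φ φ' : ℝ → E, (∀ x ∈ Icc a b, HasDerivWithinAt φ (φ' x) (Icc a b) x) →
      ContinuousOn φ' (Icc a b) → φ a = 0 →
      ∫ x in a..b, (⟪v x, φ' x⟫ + ⟪g x, φ x⟫) = 0) :
    EqOn v (fun x => ∫ y in b..x, g y) (Icc a b) := by
  set G := fun x => ∫ y in b..x, g y
  have hG : ∀ x ∈ Icc a b, HasDerivWithinAt G (g x) (Icc a b) x :=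
    fun _ hx => hasDerivWithinAt_integral_Icc hg (right_mem_Icc.2 hab.le) hx
  have hGc : ContinuousOn G (Icc a b) := fun x hx => (hG x hx).continuousWithinAt
  suffices EqOn (fun x => v x - G x) 0 (Icc a b) from fun x hx => sub_eq_zero.1 (this hx)
  refine eqOn_zero_of_forall_integral_inner_deriv_eq_zero hab (hv.sub hGc)
    fun φ φ' hφ hφ' hφa => ?_
  have hφc : ContinuousOn φ (Icc a b) := fun x hx => (hφ x hx).continuousWithinAt
  have hweak : ContinuousOn (fun x => ⟪v x, φ' x⟫ + ⟪g x, φ x⟫) (Icc a b) :=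
    (hv.inner hφ').add (hg.inner hφc)
  have hparts' : ContinuousOn (fun x => ⟪G x, φ' x⟫ + ⟪g x, φ x⟫) (Icc a b) :=
    (hGc.inner hφ').add (hg.inner hφc)
  have hparts : ∫ x in a..b, (⟪G x, φ' x⟫ + ⟪g x, φ x⟫) = 0 := by
    rw [integral_eq_sub_of_hasDerivWithinAt_Icc hab.le
      (fun x hx => (hG x hx).inner ℝ (hφ x hx)) hparts']
    simp [G, hφa]
  calc ∫ x in a..b, ⟪v x - G x, φ' x⟫
      = (∫ x in a..b, (⟪v x, φ' x⟫ + ⟪g x, φ x⟫))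
          - ∫ x in a..b, (⟪G x, φ' x⟫ + ⟪g x, φ x⟫) := by
        rw [← integral_sub (hweak.intervalIntegrable_of_Icc hab.le)
          (hparts'.intervalIntegrable_of_Icc hab.le)]
        congr 1 with x
        rw [inner_sub_left]
        ring
    _ = 0 := by rw [H φ φ' hφ hφ' hφa, hparts, sub_zero]

end Variational

theorem ContinuousOn.comp_twoScale {X Y : Type*} [TopologicalSpace X] [TopologicalSpace Y]
    {F : ℝ → ℝ → X → X → Y} {s : Set ℝ}
    (hF : ContinuousOn (fun p : ℝ × ℝ × X × X => F p.1 p.2.1 p.2.2.1 p.2.2.2) (s ×ˢ univ))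
    (ε : ℝ) {u u' : ℝ → X} (hu : ContinuousOn u s) (hu' : ContinuousOn u' s) :
    ContinuousOn (fun x => F x (x / ε) (u x) (u' x)) s :=
  hF.comp (continuousOn_id.prodMk ((continuousOn_id.div_const ε).prodMk (hu.prodMk hu')))
    fun _ hx => ⟨hx, mem_univ _⟩

theorem stmt12_general {n : ℕ} (ε : ℝ)
    (a f b : ℝ → ℝ → EuclideanSpace ℝ (Fin n) → EuclideanSpace ℝ (Fin n) →
      EuclideanSpace ℝ (Fin n))
    (hacont : ContinuousOn
      (fun p : ℝ × ℝ × EuclideanSpace ℝ (Fin n) × EuclideanSpace ℝ (Fin n) =>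
        a p.1 p.2.1 p.2.2.1 p.2.2.2)
      (Icc 0 1 ×ˢ (univ : Set (ℝ × EuclideanSpace ℝ (Fin n) × EuclideanSpace ℝ (Fin n)))))
    (hfcont : ContinuousOn
      (fun p : ℝ × ℝ × EuclideanSpace ℝ (Fin n) × EuclideanSpace ℝ (Fin n) =>
        f p.1 p.2.1 p.2.2.1 p.2.2.2)
      (Icc 0 1 ×ˢ (univ : Set (ℝ × EuclideanSpace ℝ (Fin n) × EuclideanSpace ℝ (Fin n)))))
    (hinv : ∀ x ∈ Icc (0:ℝ) 1, ∀ (y : ℝ) (uu : EuclideanSpace ℝ (Fin n)), ‖uu‖ ≤ 1 →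
      ∀ w : EuclideanSpace ℝ (Fin n), a x y uu (b x y uu w) = w ∧ b x y uu (a x y uu w) = w)
    (u u' : ℝ → EuclideanSpace ℝ (Fin n))
    (hu' : ∀ x ∈ Icc (0:ℝ) 1, HasDerivWithinAt u (u' x) (Icc 0 1) x)
    (hu'cont : ContinuousOn u' (Icc 0 1))
    (husmall : ∀ x ∈ Icc (0:ℝ) 1, ‖u x‖ < 1)
    (hu0 : u 0 = 0)
    (hvar : ∀ φ φ' : ℝ → EuclideanSpace ℝ (Fin n),
      (∀ x ∈ Icc (0:ℝ) 1, HasDerivWithinAt φ (φ' x) (Icc 0 1) x) →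
      ContinuousOn φ' (Icc 0 1) → φ 0 = 0 →
      (∫ x in (0:ℝ)..1, (⟪a x (x / ε) (u x) (u' x), φ' x⟫
        + ⟪f x (x / ε) (u x) (u' x), φ x⟫)) = 0)
    (v : ℝ → EuclideanSpace ℝ (Fin n))
    (hv : ∀ x : ℝ, v x = a x (x / ε) (u x) (u' x)) :
    (∃ v' : ℝ → EuclideanSpace ℝ (Fin n), ContinuousOn v' (Icc 0 1) ∧
      ∀ x ∈ Icc (0:ℝ) 1, HasDerivWithinAt v (v' x) (Icc 0 1) x) ∧
    (∀ x ∈ Icc (0:ℝ) 1, u x = ∫ y in (0:ℝ)..x, b y (y / ε) (u y) (v y)) ∧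
    (∀ x ∈ Icc (0:ℝ) 1,
      v x = -∫ y in x..(1:ℝ), f y (y / ε) (u y) (b y (y / ε) (u y) (v y))) := by
  have hucont : ContinuousOn u (Icc 0 1) := fun x hx => (hu' x hx).continuousWithinAt
  set g := fun x => f x (x / ε) (u x) (u' x)
  have hgcont : ContinuousOn g (Icc 0 1) := hfcont.comp_twoScale ε hucont hu'cont
  have hvcont : ContinuousOn v (Icc 0 1) := by
    simpa only [← hv] using hacont.comp_twoScale ε hucont hu'cont
  have hvg : EqOn v (fun x => ∫ y in (1:ℝ)..x, g y) (Icc 0 1) :=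
    eqOn_integral_of_forall_integral_inner_eq_zero zero_lt_one hvcont hgcont
      (by simpa only [← hv] using hvar)
  have hbv : ∀ y ∈ Icc (0:ℝ) 1, b y (y / ε) (u y) (v y) = u' y := fun y hy => by
    simpa only [hv] using (hinv y hy _ _ (husmall y hy).le (u' y)).2
  refine ⟨⟨g, hgcont, fun x hx => ?_⟩, fun x hx => ?_, fun x hx => ?_⟩
  · exact (hasDerivWithinAt_integral_Icc hgcont (right_mem_Icc.2 zero_le_one) hx).congr hvg
      (hvg hx)
  · have hsub : Icc 0 x ⊆ Icc (0:ℝ) 1 := Icc_subset_Icc_right hx.2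
    rw [integral_congr fun y hy => hbv y (hsub (uIcc_of_le hx.1 ▸ hy)),
      integral_eq_sub_of_hasDerivWithinAt_Icc hx.1 (fun y hy => (hu' y (hsub hy)).mono hsub)
        (hu'cont.mono hsub), hu0, sub_zero]
  · rw [hvg hx, ← integral_symm]
    refine integral_congr fun y hy => ?_
    rw [uIcc_comm, uIcc_of_le hx.2] at hy
    simp only [g, hbv y (Icc_subset_Icc_left hx.1 hy)]

theorem stmt12 {n : ℕ} (ε : ℝ) (hε : 0 < ε)
    (a f b : ℝ → ℝ → EuclideanSpace ℝ (Fin n) → EuclideanSpace ℝ (Fin n) →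
      EuclideanSpace ℝ (Fin n))
    (hacont : ContinuousOn
      (fun p : ℝ × ℝ × EuclideanSpace ℝ (Fin n) × EuclideanSpace ℝ (Fin n) =>
        a p.1 p.2.1 p.2.2.1 p.2.2.2)
      (Icc 0 1 ×ˢ (univ : Set (ℝ × EuclideanSpace ℝ (Fin n) × EuclideanSpace ℝ (Fin n)))))
    (hfcont : ContinuousOn
      (fun p : ℝ × ℝ × EuclideanSpace ℝ (Fin n) × EuclideanSpace ℝ (Fin n) =>
        f p.1 p.2.1 p.2.2.1 p.2.2.2)
      (Icc 0 1 ×ˢ (univ : Set (ℝ × EuclideanSpace ℝ (Fin n) × EuclideanSpace ℝ (Fin n)))))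
    (hinv : ∀ x ∈ Icc (0:ℝ) 1, ∀ (y : ℝ) (uu : EuclideanSpace ℝ (Fin n)), ‖uu‖ ≤ 1 →
      ∀ w : EuclideanSpace ℝ (Fin n), a x y uu (b x y uu w) = w ∧ b x y uu (a x y uu w) = w)
    (u u' : ℝ → EuclideanSpace ℝ (Fin n))
    (hu' : ∀ x ∈ Icc (0:ℝ) 1, HasDerivWithinAt u (u' x) (Icc 0 1) x)
    (hu'cont : ContinuousOn u' (Icc 0 1))
    (husmall : ∀ x ∈ Icc (0:ℝ) 1, ‖u x‖ < 1)
    (hu0 : u 0 = 0)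
    (hvar : ∀ φ φ' : ℝ → EuclideanSpace ℝ (Fin n),
      (∀ x ∈ Icc (0:ℝ) 1, HasDerivWithinAt φ (φ' x) (Icc 0 1) x) →
      ContinuousOn φ' (Icc 0 1) → φ 0 = 0 →
      (∫ x in (0:ℝ)..1, (⟪a x (x / ε) (u x) (u' x), φ' x⟫
        + ⟪f x (x / ε) (u x) (u' x), φ x⟫)) = 0)
    (v : ℝ → EuclideanSpace ℝ (Fin n))
    (hv : ∀ x : ℝ, v x = a x (x / ε) (u x) (u' x)) :
    (∃ v' : ℝ → EuclideanSpace ℝ (Fin n), ContinuousOn v' (Icc 0 1) ∧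
      ∀ x ∈ Icc (0:ℝ) 1, HasDerivWithinAt v (v' x) (Icc 0 1) x) ∧
    (∀ x ∈ Icc (0:ℝ) 1, u x = ∫ y in (0:ℝ)..x, b y (y / ε) (u y) (v y)) ∧
    (∀ x ∈ Icc (0:ℝ) 1,
      v x = -∫ y in x..(1:ℝ), f y (y / ε) (u y) (b y (y / ε) (u y) (v y))) :=
  stmt12_general ε a f b hacont hfcont hinv u u' hu' hu'cont husmall hu0 hvar v hv
end

section
/- Let ε > 0, a, f as above with b(x,y,u,·) := a(x,y,u,·)⁻¹, and suppose (u, v) ∈ C([0,1]; ℝⁿ)², ‖u‖_∞ < 1, satisfies the integral system u(x) = ∫₀ˣ b(y, y/ε, u(y), v(y)) dy and v(x) = −∫ₓ¹ f(y, y/ε, u(y), b(y, y/ε, u(y), v(y))) dy. Then u ∈ C¹([0,1]; ℝⁿ) with u' (x) = b(x, x/ε, u(x), v(x)), v(x) = a(x, x/ε, u(x), u'(x)), v(1) = 0, and u is a weak solution of the boundary value problem a(x, x/ε, u, u')' = f(x, x/ε, u, u') on [0,1] with u(0) = 0, a(1, 1/ε, u(1), u'(1)) = 0. -/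
/-!
Since `b` is continuous on the region `‖u‖ ≤ 1` that `u` never leaves, the integrands of the
system are continuous, so by the fundamental theorem of calculus `u' = b(…, v)` and
`v' = f(…, u')`; inverting `b` gives `v = a(…, u')`. The integral equations give `u 0 = 0`
and `v 1 = 0`, and the weak formulation is integration by parts of `⟪v, φ⟫` over `[0, 1]`,
whose boundary terms vanish because `v 1 = 0` and `φ 0 = 0`.
-/

open RealInnerProductSpace Set intervalIntegral MeasureTheory

section

variable {E : Type*} [NormedAddCommGroup E] [NormedSpace ℝ E] [CompleteSpace E]

theorem hasDerivWithinAt_Icc_of_eq_integral {u g : ℝ → E} {a b c x : ℝ}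
    (hg : ContinuousOn g (Icc a b)) (hc : c ∈ Icc a b)
    (hu : ∀ t ∈ Icc a b, u t = ∫ y in c..t, g y) (hx : x ∈ Icc a b) :
    HasDerivWithinAt u (g x) (Icc a b) x := by
  have : Fact (x ∈ Icc a b) := ⟨hx⟩
  have hFTC : HasDerivWithinAt (fun t => ∫ y in c..t, g y) (g x) (Icc a b) x :=
    integral_hasDerivWithinAt_right ((hg.mono (uIcc_subset_Icc hc hx)).intervalIntegrable)
      (hg.stronglyMeasurableAtFilter_nhdsWithin measurableSet_Icc x) (hg x hx)
  exact hFTC.congr hu (hu x hx)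

end

section

variable {F : Type*} [NormedAddCommGroup F] [InnerProductSpace ℝ F]

theorem integral_inner_deriv_add_inner_deriv_eq_sub {v v' φ φ' : ℝ → F} {a b : ℝ} (hab : a ≤ b)
    (hv : ∀ x ∈ Icc a b, HasDerivWithinAt v (v' x) (Icc a b) x)
    (hφ : ∀ x ∈ Icc a b, HasDerivWithinAt φ (φ' x) (Icc a b) x)
    (hv' : ContinuousOn v' (Icc a b)) (hφ' : ContinuousOn φ' (Icc a b)) :
    ∫ x in a..b, (⟪v x, φ' x⟫ + ⟪v' x, φ x⟫) = ⟪v b, φ b⟫ - ⟪v a, φ a⟫ := by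
  have hvc : ContinuousOn v (Icc a b) := fun x hx => (hv x hx).continuousWithinAt
  have hφc : ContinuousOn φ (Icc a b) := fun x hx => (hφ x hx).continuousWithinAt
  have hint : ContinuousOn (fun x => ⟪v x, φ' x⟫ + ⟪v' x, φ x⟫) (Icc a b) :=
    (hvc.inner hφ').add (hv'.inner hφc)
  refine integral_eq_sub_of_hasDeriv_right_of_le hab (hvc.inner hφc) (fun x hx => ?_)
    (hint.intervalIntegrable_of_Icc hab)
  have hIcc : Icc a b ∈ nhds x := Icc_mem_nhds hx.1 hx.2
  have hvx := (hv x (Ioo_subset_Icc_self hx)).hasDerivAt hIcc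
  have hφx := (hφ x (Ioo_subset_Icc_self hx)).hasDerivAt hIcc
  exact (hvx.inner ℝ hφx).hasDerivWithinAt

end

theorem stmt13_general {n : ℕ} (ε : ℝ)
    (a f b : ℝ → ℝ → EuclideanSpace ℝ (Fin n) → EuclideanSpace ℝ (Fin n) →
      EuclideanSpace ℝ (Fin n))
    (hfcont : ContinuousOn
      (fun p : ℝ × ℝ × EuclideanSpace ℝ (Fin n) × EuclideanSpace ℝ (Fin n) =>
        f p.1 p.2.1 p.2.2.1 p.2.2.2)
      (Icc 0 1 ×ˢ (univ : Set (ℝ × EuclideanSpace ℝ (Fin n) × EuclideanSpace ℝ (Fin n)))))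
    (hbcont : ContinuousOn
      (fun p : ℝ × ℝ × EuclideanSpace ℝ (Fin n) × EuclideanSpace ℝ (Fin n) =>
        b p.1 p.2.1 p.2.2.1 p.2.2.2)
      (Icc 0 1 ×ˢ ((univ : Set ℝ) ×ˢ
        ({uu : EuclideanSpace ℝ (Fin n) | ‖uu‖ ≤ 1} ×ˢ (univ : Set (EuclideanSpace ℝ (Fin n)))))))
    (hinv : ∀ x ∈ Icc (0:ℝ) 1, ∀ (y : ℝ) (uu : EuclideanSpace ℝ (Fin n)), ‖uu‖ ≤ 1 →
      ∀ w : EuclideanSpace ℝ (Fin n), a x y uu (b x y uu w) = w ∧ b x y uu (a x y uu w) = w)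
    (u v : ℝ → EuclideanSpace ℝ (Fin n))
    (hucont : ContinuousOn u (Icc 0 1)) (hvcont : ContinuousOn v (Icc 0 1))
    (husmall : ∀ x ∈ Icc (0:ℝ) 1, ‖u x‖ < 1)
    (hueq : ∀ x ∈ Icc (0:ℝ) 1, u x = ∫ y in (0:ℝ)..x, b y (y / ε) (u y) (v y))
    (hveq : ∀ x ∈ Icc (0:ℝ) 1,
      v x = -∫ y in x..(1:ℝ), f y (y / ε) (u y) (b y (y / ε) (u y) (v y))) :
    u 0 = 0 ∧
    (∀ x ∈ Icc (0:ℝ) 1, HasDerivWithinAt u (b x (x / ε) (u x) (v x)) (Icc 0 1) x) ∧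
    (∀ x ∈ Icc (0:ℝ) 1, v x = a x (x / ε) (u x) (b x (x / ε) (u x) (v x))) ∧
    v 1 = 0 ∧
    a 1 (1 / ε) (u 1) (b 1 (1 / ε) (u 1) (v 1)) = 0 ∧
    (∀ φ φ' : ℝ → EuclideanSpace ℝ (Fin n),
      (∀ x ∈ Icc (0:ℝ) 1, HasDerivWithinAt φ (φ' x) (Icc 0 1) x) →
      ContinuousOn φ' (Icc 0 1) → φ 0 = 0 →
      (∫ x in (0:ℝ)..1, (⟪a x (x / ε) (u x) (b x (x / ε) (u x) (v x)), φ' x⟫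
        + ⟪f x (x / ε) (u x) (b x (x / ε) (u x) (v x)), φ x⟫)) = 0) := by
  have h0 : (0:ℝ) ∈ Icc (0:ℝ) 1 := left_mem_Icc.2 zero_le_one
  have h1 : (1:ℝ) ∈ Icc (0:ℝ) 1 := right_mem_Icc.2 zero_le_one
  set g := fun x => b x (x / ε) (u x) (v x)
  set h := fun x => f x (x / ε) (u x) (g x)
  have hscale : ContinuousOn (fun x : ℝ => x / ε) (Icc 0 1) := continuousOn_id.div_const ε
  have hgcont : ContinuousOn g (Icc 0 1) :=
    hbcont.comp (continuousOn_id.prodMk (hscale.prodMk (hucont.prodMk hvcont)))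
      fun x hx => ⟨hx, mem_univ _, (husmall x hx).le, mem_univ _⟩
  have hhcont : ContinuousOn h (Icc 0 1) :=
    hfcont.comp (continuousOn_id.prodMk (hscale.prodMk (hucont.prodMk hgcont)))
      fun x hx => ⟨hx, mem_univ _⟩
  have hv_int : ∀ x ∈ Icc (0:ℝ) 1, v x = ∫ y in (1:ℝ)..x, h y := fun x hx => by
    rw [hveq x hx, integral_symm, neg_neg]
  have hv' : ∀ x ∈ Icc (0:ℝ) 1, HasDerivWithinAt v (h x) (Icc 0 1) x := fun _ =>
    hasDerivWithinAt_Icc_of_eq_integral hhcont h1 hv_int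
  have hva : ∀ x ∈ Icc (0:ℝ) 1, v x = a x (x / ε) (u x) (g x) := fun x hx =>
    ((hinv x hx (x / ε) (u x) (husmall x hx).le (v x)).1).symm
  have hv1 : v 1 = 0 := by simpa using hveq 1 h1
  refine ⟨by simpa using hueq 0 h0, fun _ => hasDerivWithinAt_Icc_of_eq_integral hgcont h0 hueq,
    hva, hv1, by rw [← hva 1 h1, hv1], fun φ φ' hφ hφ' hφ0 => ?_⟩
  calc (∫ x in (0:ℝ)..1, (⟪a x (x / ε) (u x) (g x), φ' x⟫ + ⟪h x, φ x⟫))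
      = ∫ x in (0:ℝ)..1, (⟪v x, φ' x⟫ + ⟪h x, φ x⟫) :=
        integral_congr fun x hx => by
          rw [hva x (by rwa [uIcc_of_le zero_le_one] at hx)]
    _ = ⟪v 1, φ 1⟫ - ⟪v 0, φ 0⟫ :=
        integral_inner_deriv_add_inner_deriv_eq_sub zero_le_one hv' hφ hhcont hφ'
    _ = 0 := by rw [hv1, hφ0, inner_zero_left, inner_zero_right, sub_zero]

theorem stmt13 {n : ℕ} (ε : ℝ) (hε : 0 < ε)
    (a f b : ℝ → ℝ → EuclideanSpace ℝ (Fin n) → EuclideanSpace ℝ (Fin n) →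
      EuclideanSpace ℝ (Fin n))
    (hacont : ContinuousOn
      (fun p : ℝ × ℝ × EuclideanSpace ℝ (Fin n) × EuclideanSpace ℝ (Fin n) =>
        a p.1 p.2.1 p.2.2.1 p.2.2.2)
      (Icc 0 1 ×ˢ (univ : Set (ℝ × EuclideanSpace ℝ (Fin n) × EuclideanSpace ℝ (Fin n)))))
    (hfcont : ContinuousOn
      (fun p : ℝ × ℝ × EuclideanSpace ℝ (Fin n) × EuclideanSpace ℝ (Fin n) =>
        f p.1 p.2.1 p.2.2.1 p.2.2.2)
      (Icc 0 1 ×ˢ (univ : Set (ℝ × EuclideanSpace ℝ (Fin n) × EuclideanSpace ℝ (Fin n)))))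
    (hbcont : ContinuousOn
      (fun p : ℝ × ℝ × EuclideanSpace ℝ (Fin n) × EuclideanSpace ℝ (Fin n) =>
        b p.1 p.2.1 p.2.2.1 p.2.2.2)
      (Icc 0 1 ×ˢ ((univ : Set ℝ) ×ˢ
        ({uu : EuclideanSpace ℝ (Fin n) | ‖uu‖ ≤ 1} ×ˢ (univ : Set (EuclideanSpace ℝ (Fin n)))))))
    (hinv : ∀ x ∈ Icc (0:ℝ) 1, ∀ (y : ℝ) (uu : EuclideanSpace ℝ (Fin n)), ‖uu‖ ≤ 1 →
      ∀ w : EuclideanSpace ℝ (Fin n), a x y uu (b x y uu w) = w ∧ b x y uu (a x y uu w) = w)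
    (u v : ℝ → EuclideanSpace ℝ (Fin n))
    (hucont : ContinuousOn u (Icc 0 1)) (hvcont : ContinuousOn v (Icc 0 1))
    (husmall : ∀ x ∈ Icc (0:ℝ) 1, ‖u x‖ < 1)
    (hueq : ∀ x ∈ Icc (0:ℝ) 1, u x = ∫ y in (0:ℝ)..x, b y (y / ε) (u y) (v y))
    (hveq : ∀ x ∈ Icc (0:ℝ) 1,
      v x = -∫ y in x..(1:ℝ), f y (y / ε) (u y) (b y (y / ε) (u y) (v y))) :
    u 0 = 0 ∧
    (∀ x ∈ Icc (0:ℝ) 1, HasDerivWithinAt u (b x (x / ε) (u x) (v x)) (Icc 0 1) x) ∧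
    (∀ x ∈ Icc (0:ℝ) 1, v x = a x (x / ε) (u x) (b x (x / ε) (u x) (v x))) ∧
    v 1 = 0 ∧
    a 1 (1 / ε) (u 1) (b 1 (1 / ε) (u 1) (v 1)) = 0 ∧
    (∀ φ φ' : ℝ → EuclideanSpace ℝ (Fin n),
      (∀ x ∈ Icc (0:ℝ) 1, HasDerivWithinAt φ (φ' x) (Icc 0 1) x) →
      ContinuousOn φ' (Icc 0 1) → φ 0 = 0 →
      (∫ x in (0:ℝ)..1, (⟪a x (x / ε) (u x) (b x (x / ε) (u x) (v x)), φ' x⟫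
        + ⟪f x (x / ε) (u x) (b x (x / ε) (u x) (v x)), φ x⟫)) = 0) :=
  stmt13_general ε a f b hfcont hbcont hinv u v hucont hvcont husmall hueq hveq
end
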